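/- arXiv:1401.7076 — 2 statements merged into one kernel-verified Lean document; each statement's English description precedes it below -/
import Mathlib

section
/- Stability of admissibility under grid refinement: let Ω ∈ A²_{k₁,k₂} with respect to a 2D grid T' (a product of two locally finite node sets). If finitely many new vertical and horizontal lines l₁,…,l_k are added to T', then Ω, considered with respect to T' ∪ {l₁,…,l_k}, belongs to A²_{k₁,k₂} as well. The same stability holds for the class Ã²_{k₁,k₂} (complement-admissible domains). -/
open Set

noncomputable section

/-- Cells of the planar integer grid, indexed by their lower-left corner. -/
def cellZ (p : ℤ × ℤ) : Set (ℝ × ℝ) :=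
  Set.Icc (p.1 : ℝ) (p.1 + 1) ×ˢ Set.Icc (p.2 : ℝ) (p.2 + 1)

/-- The planar domain formed by the cells with indices in `S`. -/
def cellU (S : Finset (ℤ × ℤ)) : Set (ℝ × ℝ) := ⋃ p ∈ S, cellZ p

/-- The domain is a topological 2-manifold with boundary: no two cells meet only
at a corner (the inadmissible vertex configurations are excluded). -/
def ManifoldLike (S : Finset (ℤ × ℤ)) : Prop :=
  ∀ i j : ℤ,
    ¬(((i - 1, j - 1) ∈ S ∧ (i, j) ∈ S ∧ (i - 1, j) ∉ S ∧ (i, j - 1) ∉ S) ∨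
      ((i - 1, j) ∈ S ∧ (i, j - 1) ∈ S ∧ (i - 1, j - 1) ∉ S ∧ (i, j) ∉ S))

/-- The 1D admissibility class `A¹_k` for a set of cell indices: the number of cells
strictly between two neighboring connected components exceeds `k`. -/
def Adm1 (k : ℤ) (A : Set ℤ) : Prop :=
  ∀ a b : ℤ, a ∈ A → b ∈ A → a < b → (∀ c : ℤ, a < c → c < b → c ∉ A) →
    b = a + 1 ∨ k < b - a - 1

/-- Horizontal slice (row) of a planar cell domain. -/
def row (S : Finset (ℤ × ℤ)) (j : ℤ) : Set ℤ := {i | (i, j) ∈ S}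

/-- Vertical slice (column) of a planar cell domain. -/
def col (S : Finset (ℤ × ℤ)) (i : ℤ) : Set ℤ := {j | (i, j) ∈ S}

/-- Horizontal dilatation (combinatorially, on cell indices of the half-shifted grid). -/
def hdil (S : Finset (ℤ × ℤ)) : Finset (ℤ × ℤ) :=
  S ∪ S.image (fun p => (p.1 + 1, p.2))

/-- Vertical dilatation. -/
def vdil (S : Finset (ℤ × ℤ)) : Finset (ℤ × ℤ) :=
  S ∪ S.image (fun p => (p.1, p.2 + 1))

/-- The dilatation `Ω^e_{k₁,k₂}` (cell indices w.r.t. the suitably half-shifted grid). -/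
def dil (S : Finset (ℤ × ℤ)) (k₁ k₂ : ℕ) : Finset (ℤ × ℤ) :=
  hdil^[k₁] (vdil^[k₂] S)

/-- `Ω` admits a horizontal offset at distance 1/2: all rows `H(Ω)` and the consecutive
unions `σH(Ω)` are in `A¹₁`. -/
def rowAdmissible (S : Finset (ℤ × ℤ)) : Prop :=
  ∀ j : ℤ, Adm1 1 (row S j) ∧ Adm1 1 (row S j ∪ row S (j + 1))

/-- `Ω` admits a vertical offset at distance 1/2. -/
def colAdmissible (S : Finset (ℤ × ℤ)) : Prop :=
  ∀ i : ℤ, Adm1 1 (col S i) ∧ Adm1 1 (col S i ∪ col S (i + 1))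

/-- The class `A²_{1,0}`. -/
def A210 (S : Finset (ℤ × ℤ)) : Prop := ManifoldLike S ∧ rowAdmissible S

/-- The class `A²_{0,1}`. -/
def A201 (S : Finset (ℤ × ℤ)) : Prop := ManifoldLike S ∧ colAdmissible S

/-- The admissibility classes `A²_{k₁,k₂}`, defined inductively. -/
def A2 : ℕ → ℕ → Finset (ℤ × ℤ) → Prop
  | 0, 0, S => ManifoldLike S
  | k₁ + 1, k₂, S => A2 k₁ k₂ S ∧ A210 (dil S k₁ k₂)
  | 0, k₂ + 1, S => A2 0 k₂ S ∧ A201 (dil S 0 k₂)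

/-- Horizontal inner edges (indexed by their left endpoint `(i,j)`: the edge from
`(i,j)` to `(i+1,j)`, inner iff the cells above and below are both present). -/
def innerH (S : Finset (ℤ × ℤ)) : Set (ℤ × ℤ) :=
  {p | (p.1, p.2) ∈ S ∧ (p.1, p.2 - 1) ∈ S}

/-- Vertical inner edges. -/
def innerV (S : Finset (ℤ × ℤ)) : Set (ℤ × ℤ) :=
  {p | (p.1, p.2) ∈ S ∧ (p.1 - 1, p.2) ∈ S}

/-- Horizontal edges of the domain. -/
def edgesH (S : Finset (ℤ × ℤ)) : Set (ℤ × ℤ) :=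
  {p | (p.1, p.2) ∈ S ∨ (p.1, p.2 - 1) ∈ S}

/-- Vertical edges of the domain. -/
def edgesV (S : Finset (ℤ × ℤ)) : Set (ℤ × ℤ) :=
  {p | (p.1, p.2) ∈ S ∨ (p.1 - 1, p.2) ∈ S}

/-- Vertices of the domain. -/
def verts (S : Finset (ℤ × ℤ)) : Set (ℤ × ℤ) :=
  {p | (p.1, p.2) ∈ S ∨ (p.1 - 1, p.2) ∈ S ∨ (p.1, p.2 - 1) ∈ S ∨ (p.1 - 1, p.2 - 1) ∈ S}

/-- Inner vertices of the domain. -/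
def innerVert (S : Finset (ℤ × ℤ)) : Set (ℤ × ℤ) :=
  {p | (p.1, p.2) ∈ S ∧ (p.1 - 1, p.2) ∈ S ∧ (p.1, p.2 - 1) ∈ S ∧ (p.1 - 1, p.2 - 1) ∈ S}

/-- Splitting the column `i₀` of the grid by a new vertical line: cells in column `i₀`
become two cells, columns to the right are shifted. -/
def insertCol (i₀ : ℤ) (S : Finset (ℤ × ℤ)) : Finset (ℤ × ℤ) :=
  S.filter (fun p => p.1 ≤ i₀) ∪ (S.filter (fun p => i₀ ≤ p.1)).image (fun p => (p.1 + 1, p.2))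

/-- Splitting the row `j₀` of the grid by a new horizontal line. -/
def insertRow (j₀ : ℤ) (S : Finset (ℤ × ℤ)) : Finset (ℤ × ℤ) :=
  S.filter (fun p => p.2 ≤ j₀) ∪ (S.filter (fun p => j₀ ≤ p.2)).image (fun p => (p.1, p.2 + 1))

/-- One grid-refinement operation: insertion of a vertical (`true`) or horizontal
(`false`) line. -/
def applyOp (o : Bool × ℤ) (S : Finset (ℤ × ℤ)) : Finset (ℤ × ℤ) :=
  if o.1 then insertCol o.2 S else insertRow o.2 S

/-- The complement-admissibility class `Ã²_{k₁,k₂}`: the complement of the domain in a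
sufficiently large surrounding rectangle (containing it in its interior) is in `A²_{k₁,k₂}`. -/
def Atilde (k₁ k₂ : ℕ) (S : Finset (ℤ × ℤ)) : Prop :=
  ∃ a₁ b₁ a₂ b₂ : ℤ,
    S ⊆ (Finset.Icc (a₁ + 1) (b₁ - 1)) ×ˢ (Finset.Icc (a₂ + 1) (b₂ - 1)) ∧
    A2 k₁ k₂ (((Finset.Icc a₁ b₁) ×ˢ (Finset.Icc a₂ b₂)) \ S)

namespace Stab17

/-! ### basic infrastructure -/

def NoGap1 (A : Set ℤ) : Prop := ∀ a : ℤ, a ∈ A → a + 2 ∈ A → a + 1 ∈ A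

theorem adm1_one_iff (A : Set ℤ) : Adm1 1 A ↔ NoGap1 A := by
  constructor
  · intro h a ha ha2
    by_contra hn
    rcases h a (a+2) ha ha2 (by omega) (fun c h1 h2 hc => by
      have : c = a + 1 := by omega
      exact hn (this ▸ hc)) with h' | h' <;> omega
  · intro h a b ha hb hlt hgap
    by_contra hn
    push_neg at hn
    have hb2 : b = a + 2 := by omega
    exact hgap (a+1) (by omega) (by omega) (h a ha (hb2 ▸ hb))

theorem rowAdmissible_iff (S : Finset (ℤ × ℤ)) :
    rowAdmissible S ↔ ∀ j : ℤ, NoGap1 (row S j) ∧ NoGap1 (row S j ∪ row S (j+1)) := by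
  unfold rowAdmissible
  simp only [adm1_one_iff]

theorem colAdmissible_iff (S : Finset (ℤ × ℤ)) :
    colAdmissible S ↔ ∀ i : ℤ, NoGap1 (col S i) ∧ NoGap1 (col S i ∪ col S (i+1)) := by
  unfold colAdmissible
  simp only [adm1_one_iff]

/-! ### membership in dilatations -/

theorem mem_hdil (T : Finset (ℤ × ℤ)) (x y : ℤ) :
    (x, y) ∈ hdil T ↔ (x, y) ∈ T ∨ (x - 1, y) ∈ T := by
  unfold hdil
  simp only [Finset.mem_union, Finset.mem_image]
  constructor
  · rintro (h | ⟨⟨p1, p2⟩, hp, heq⟩)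
    · exact Or.inl h
    · refine Or.inr ?_
      have h1 : p1 = x - 1 := by have := congrArg Prod.fst heq; simp at this; omega
      have h2 : p2 = y := by have := congrArg Prod.snd heq; simpa using this
      rwa [h1, h2] at hp
  · rintro (h | h)
    · exact Or.inl h
    · exact Or.inr ⟨(x-1, y), h, by simp⟩

theorem mem_vdil (T : Finset (ℤ × ℤ)) (x y : ℤ) :
    (x, y) ∈ vdil T ↔ (x, y) ∈ T ∨ (x, y - 1) ∈ T := by
  unfold vdil
  simp only [Finset.mem_union, Finset.mem_image]
  constructor
  · rintro (h | ⟨⟨p1, p2⟩, hp, heq⟩)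
    · exact Or.inl h
    · refine Or.inr ?_
      have h1 : p1 = x := by have := congrArg Prod.fst heq; simpa using this
      have h2 : p2 = y - 1 := by have := congrArg Prod.snd heq; simp at this; omega
      rwa [h1, h2] at hp
  · rintro (h | h)
    · exact Or.inl h
    · exact Or.inr ⟨(x, y-1), h, by simp⟩

theorem mem_hdil_iter (k : ℕ) (T : Finset (ℤ × ℤ)) (x y : ℤ) :
    (x, y) ∈ hdil^[k] T ↔ ∃ u : ℤ, 0 ≤ u ∧ u ≤ k ∧ (x - u, y) ∈ T := by
  induction k generalizing x with
  | zero =>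
    simp only [Function.iterate_zero, id, Nat.cast_zero]
    constructor
    · intro h; exact ⟨0, le_refl 0, le_refl 0, by simpa using h⟩
    · rintro ⟨u, h0, hk, hm⟩
      have h : u = 0 := by omega
      subst h; simpa using hm
  | succ k ih =>
    rw [Function.iterate_succ_apply', mem_hdil, ih, ih]
    constructor
    · rintro (⟨u, h0, hk, hm⟩ | ⟨u, h0, hk, hm⟩)
      · exact ⟨u, h0, by push_cast; omega, hm⟩
      · exact ⟨u + 1, by omega, by push_cast; omega,
          by have : x - 1 - u = x - (u+1) := by omega
             rwa [this] at hm⟩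
    · rintro ⟨u, h0, hk, hm⟩
      by_cases hu : u ≤ k
      · exact Or.inl ⟨u, h0, hu, hm⟩
      · refine Or.inr ⟨u - 1, by push_cast at hk ⊢; omega, by push_cast at hk ⊢; omega, ?_⟩
        have : x - 1 - (u - 1) = x - u := by omega
        rwa [this]

theorem mem_vdil_iter (k : ℕ) (T : Finset (ℤ × ℤ)) (x y : ℤ) :
    (x, y) ∈ vdil^[k] T ↔ ∃ v : ℤ, 0 ≤ v ∧ v ≤ k ∧ (x, y - v) ∈ T := by
  induction k generalizing y with
  | zero =>
    simp only [Function.iterate_zero, id, Nat.cast_zero]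
    constructor
    · intro h; exact ⟨0, le_refl 0, le_refl 0, by simpa using h⟩
    · rintro ⟨v, h0, hk, hm⟩
      have h : v = 0 := by omega
      subst h; simpa using hm
  | succ k ih =>
    rw [Function.iterate_succ_apply', mem_vdil, ih, ih]
    constructor
    · rintro (⟨v, h0, hk, hm⟩ | ⟨v, h0, hk, hm⟩)
      · exact ⟨v, h0, by push_cast; omega, hm⟩
      · exact ⟨v + 1, by omega, by push_cast; omega,
          by have : y - 1 - v = y - (v+1) := by omega
             rwa [this] at hm⟩
    · rintro ⟨v, h0, hk, hm⟩
      by_cases hv : v ≤ k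
      · exact Or.inl ⟨v, h0, hv, hm⟩
      · refine Or.inr ⟨v - 1, by push_cast at hk ⊢; omega, by push_cast at hk ⊢; omega, ?_⟩
        have : y - 1 - (v - 1) = y - v := by omega
        rwa [this]

/-- the "column stack" predicate: `(m,y)` is in the pure vertical dilatation. -/
def Ft (S : Finset (ℤ × ℤ)) (t : ℕ) (m y : ℤ) : Prop :=
  ∃ v : ℤ, 0 ≤ v ∧ v ≤ t ∧ (m, y - v) ∈ S

theorem mem_dil (S : Finset (ℤ × ℤ)) (s t : ℕ) (x y : ℤ) :
    (x, y) ∈ dil S s t ↔ ∃ m : ℤ, x - s ≤ m ∧ m ≤ x ∧ Ft S t m y := by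
  unfold dil
  rw [mem_hdil_iter]
  constructor
  · rintro ⟨u, h0, hk, hm⟩
    rw [mem_vdil_iter] at hm
    rcases hm with ⟨v, hv0, hvk, hm⟩
    exact ⟨x - u, by omega, by omega, v, hv0, hvk, hm⟩
  · rintro ⟨m, h1, h2, v, hv0, hvk, hm⟩
    exact ⟨x - m, by omega, by omega, by rw [mem_vdil_iter]; exact ⟨v, hv0, hvk, by
      have : x - (x - m) = m := by omega
      rw [this]; exact hm⟩⟩

end Stab17
namespace Stab17

/-! ### the reindexing map of a column insertion -/

def g (n x : ℤ) : ℤ := if x ≤ n then x else x - 1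

theorem g_cases (n x : ℤ) : (x ≤ n ∧ g n x = x) ∨ (n < x ∧ g n x = x - 1) := by
  unfold g; split_ifs with h
  · exact Or.inl ⟨h, rfl⟩
  · exact Or.inr ⟨by omega, rfl⟩

theorem g_mono (n : ℤ) {x y : ℤ} (h : x ≤ y) : g n x ≤ g n y := by
  rcases g_cases n x with ⟨h1, e1⟩ | ⟨h1, e1⟩ <;> rcases g_cases n y with ⟨h2, e2⟩ | ⟨h2, e2⟩ <;> omega

theorem g_diff (n : ℤ) {x k : ℤ} (hk : 0 ≤ k) :
    k - 1 ≤ g n x - g n (x - k) ∧ g n x - g n (x - k) ≤ k := by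
  rcases g_cases n x with ⟨h1, e1⟩ | ⟨h1, e1⟩ <;> rcases g_cases n (x - k) with ⟨h2, e2⟩ | ⟨h2, e2⟩ <;> omega

/-- discrete intermediate value property of `g` along a window. -/
theorem g_ivt (n x k m : ℤ) (hk : 0 ≤ k) (h1 : g n (x - k) ≤ m) (h2 : m ≤ g n x) :
    ∃ u : ℤ, 0 ≤ u ∧ u ≤ k ∧ g n (x - u) = m := by
  rcases g_cases n m with ⟨hm, em⟩ | ⟨hm, em⟩
  · -- try u = x - m  (g n m = m)
    by_cases hb : x - m ≤ k
    · refine ⟨x - m, ?_, hb, ?_⟩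
      · have := (g_cases n x); omega
      · have : x - (x - m) = m := by omega
        rw [this, em]
    · -- then m = n = x - k - 1, witness u = k
      refine ⟨k, hk, le_refl k, ?_⟩
      rcases g_cases n (x - k) with ⟨h3, e3⟩ | ⟨h3, e3⟩ <;> omega
  · -- m > n ; witness u = x - m - 1 with g n (m+1) = m
    refine ⟨x - m - 1, ?_, ?_, ?_⟩
    · rcases g_cases n x with ⟨h3, e3⟩ | ⟨h3, e3⟩ <;> omega
    · rcases g_cases n (x - k) with ⟨h3, e3⟩ | ⟨h3, e3⟩ <;> omega
    · have hxm : x - (x - m - 1) = m + 1 := by omega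
      rw [hxm]
      rcases g_cases n (m + 1) with ⟨h3, e3⟩ | ⟨h3, e3⟩ <;> omega

theorem mem_insertCol (n : ℤ) (S : Finset (ℤ × ℤ)) (x y : ℤ) :
    (x, y) ∈ insertCol n S ↔ (g n x, y) ∈ S := by
  unfold insertCol
  simp only [Finset.mem_union, Finset.mem_filter, Finset.mem_image]
  constructor
  · rintro (⟨h, hle⟩ | ⟨⟨p1, p2⟩, ⟨hp, hle⟩, heq⟩)
    · rcases g_cases n x with ⟨h1, e1⟩ | ⟨h1, e1⟩
      · rwa [e1]
      · omega
    · have h1 : p1 = x - 1 := by have := congrArg Prod.fst heq; simp at this; omega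
      have h2 : p2 = y := by have := congrArg Prod.snd heq; simpa using this
      subst h1; subst h2
      rcases g_cases n x with ⟨h3, e3⟩ | ⟨h3, e3⟩
      · simp at hle; omega
      · rwa [e3]
  · intro h
    rcases g_cases n x with ⟨h1, e1⟩ | ⟨h1, e1⟩
    · exact Or.inl ⟨by rwa [e1] at h, h1⟩
    · exact Or.inr ⟨(x - 1, y), ⟨by rwa [e1] at h, by simp; omega⟩, by simp⟩

theorem mem_insertRow (n : ℤ) (S : Finset (ℤ × ℤ)) (x y : ℤ) :
    (x, y) ∈ insertRow n S ↔ (x, g n y) ∈ S := by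
  unfold insertRow
  simp only [Finset.mem_union, Finset.mem_filter, Finset.mem_image]
  constructor
  · rintro (⟨h, hle⟩ | ⟨⟨p1, p2⟩, ⟨hp, hle⟩, heq⟩)
    · rcases g_cases n y with ⟨h1, e1⟩ | ⟨h1, e1⟩
      · rwa [e1]
      · omega
    · have h1 : p1 = x := by have := congrArg Prod.fst heq; simpa using this
      have h2 : p2 = y - 1 := by have := congrArg Prod.snd heq; simp at this; omega
      subst h1; subst h2
      rcases g_cases n y with ⟨h3, e3⟩ | ⟨h3, e3⟩
      · simp at hle; omega
      · rwa [e3]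
  · intro h
    rcases g_cases n y with ⟨h1, e1⟩ | ⟨h1, e1⟩
    · exact Or.inl ⟨by rwa [e1] at h, h1⟩
    · exact Or.inr ⟨(x, y - 1), ⟨by rwa [e1] at h, by simp; omega⟩, by simp⟩

/-- membership in dilatations of a column-refined domain, window form. -/
theorem mem_dil_insertCol (n : ℤ) (S : Finset (ℤ × ℤ)) (s t : ℕ) (x y : ℤ) :
    (x, y) ∈ dil (insertCol n S) s t ↔
      ∃ m : ℤ, g n (x - s) ≤ m ∧ m ≤ g n x ∧ Ft S t m y := by
  rw [mem_dil]
  constructor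
  · rintro ⟨m, h1, h2, v, hv0, hvt, hm⟩
    rw [mem_insertCol] at hm
    refine ⟨g n m, ?_, g_mono n h2, v, hv0, hvt, hm⟩
    have : x - s - (x - m - s) = m := by ring_nf
    calc g n (x - s) ≤ g n m := g_mono n h1
    _ = g n m := rfl
  · rintro ⟨m, h1, h2, hft⟩
    obtain ⟨u, hu0, hus, hgu⟩ := g_ivt n x s m (by positivity) h1 h2
    rcases hft with ⟨v, hv0, hvt, hm⟩
    exact ⟨x - u, by omega, by omega, v, hv0, hvt, by rw [mem_insertCol, hgu]; exact hm⟩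

end Stab17
namespace Stab17

theorem Ft_succ (S : Finset (ℤ × ℤ)) (t : ℕ) (m y : ℤ) :
    Ft S (t+1) m y ↔ Ft S t m y ∨ Ft S t m (y-1) := by
  unfold Ft
  constructor
  · rintro ⟨v, h0, hv, hm⟩
    by_cases hvt : v ≤ t
    · exact Or.inl ⟨v, h0, hvt, hm⟩
    · refine Or.inr ⟨v - 1, by push_cast at hv ⊢; omega, by push_cast at hv ⊢; omega, ?_⟩
      have : y - 1 - (v - 1) = y - v := by omega
      rwa [this]
  · rintro (⟨v, h0, hv, hm⟩ | ⟨v, h0, hv, hm⟩)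
    · exact ⟨v, h0, by push_cast; omega, hm⟩
    · exact ⟨v + 1, by omega, by push_cast; omega, by
        have : y - (v+1) = y - 1 - v := by omega
        rwa [this]⟩

theorem mem_dil_vsucc (S : Finset (ℤ × ℤ)) (s t : ℕ) (x y : ℤ) :
    (x, y) ∈ dil S s (t+1) ↔ (x, y) ∈ dil S s t ∨ (x, y - 1) ∈ dil S s t := by
  simp only [mem_dil, Ft_succ]
  constructor
  · rintro ⟨m, h1, h2, hf | hf⟩
    · exact Or.inl ⟨m, h1, h2, hf⟩
    · exact Or.inr ⟨m, h1, h2, hf⟩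
  · rintro (⟨m, h1, h2, hf⟩ | ⟨m, h1, h2, hf⟩)
    · exact ⟨m, h1, h2, Or.inl hf⟩
    · exact ⟨m, h1, h2, Or.inr hf⟩

theorem mem_dil_hsucc (S : Finset (ℤ × ℤ)) (s t : ℕ) (x y : ℤ) :
    (x, y) ∈ dil S (s+1) t ↔ (x, y) ∈ dil S s t ∨ (x - 1, y) ∈ dil S s t := by
  simp only [mem_dil]
  constructor
  · rintro ⟨m, h1, h2, hf⟩
    by_cases hm : x - s ≤ m
    · exact Or.inl ⟨m, hm, h2, hf⟩
    · exact Or.inr ⟨m, by push_cast at h1 ⊢; omega, by push_cast at h1 ⊢; omega, hf⟩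
  · rintro (⟨m, h1, h2, hf⟩ | ⟨m, h1, h2, hf⟩)
    · exact ⟨m, by push_cast at h1 ⊢; omega, h2, hf⟩
    · exact ⟨m, by push_cast at h1 ⊢; omega, by omega, hf⟩

theorem sigma_row_eq (S : Finset (ℤ × ℤ)) (s t : ℕ) (c : ℤ) :
    row (dil S s t) c ∪ row (dil S s t) (c+1) = row (dil S s (t+1)) (c+1) := by
  ext x
  simp only [row, Set.mem_union, Set.mem_setOf_eq, mem_dil_vsucc S s t x (c+1),
    show c + 1 - 1 = c by omega]
  tauto

/-- Key descent: admissibility of rows one vertical-dilatation level down. -/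
theorem core_row (S : Finset (ℤ × ℤ)) (s t : ℕ)
    (h1 : ∀ c : ℤ, NoGap1 (row (dil S s (t+1)) c))
    (h2 : ∀ x : ℤ, NoGap1 (col (dil S s t) x)) :
    rowAdmissible (dil S s t) := by
  rw [rowAdmissible_iff]
  intro c
  constructor
  · intro a ha ha2
    simp only [row, Set.mem_setOf_eq] at ha ha2 ⊢
    by_contra hn
    -- push up one level
    have m1 : ∀ x : ℤ, (x, c) ∈ dil S s t → x ∈ row (dil S s (t+1)) c := by
      intro x hx
      simp only [row, Set.mem_setOf_eq, mem_dil_vsucc]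
      exact Or.inl hx
    have m2 : ∀ x : ℤ, (x, c) ∈ dil S s t → x ∈ row (dil S s (t+1)) (c+1) := by
      intro x hx
      simp only [row, Set.mem_setOf_eq, mem_dil_vsucc, show c + 1 - 1 = c by omega]
      exact Or.inr hx
    have s1 := h1 c a (m1 a ha) (m1 (a+2) ha2)
    have s2 := h1 (c+1) a (m2 a ha) (m2 (a+2) ha2)
    simp only [row, Set.mem_setOf_eq, mem_dil_vsucc, show c + 1 - 1 = c by omega] at s1 s2
    have hc1 : (a+1, c-1) ∈ dil S s t := by tauto
    have hc2 : (a+1, c+1) ∈ dil S s t := by tauto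
    have := h2 (a+1) (c-1) (by simpa [col, Set.mem_setOf_eq] using hc1)
      (by simpa [col, Set.mem_setOf_eq, show c - 1 + 2 = c + 1 by omega] using hc2)
    simp only [col, Set.mem_setOf_eq, show c - 1 + 1 = c by omega] at this
    exact hn this
  · rw [sigma_row_eq]
    exact h1 (c+1)

/-- horizontal dilatation of a row-admissible set is manifold-like. -/
theorem ML1 (S : Finset (ℤ × ℤ)) (s t : ℕ)
    (h : ∀ c : ℤ, NoGap1 (row (dil S s t) c ∪ row (dil S s t) (c+1))) :
    ManifoldLike (dil S (s+1) t) := by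
  intro i j hbad
  have H := h (j-1)
  unfold NoGap1 at H
  simp only [row, Set.mem_union, Set.mem_setOf_eq, show (j:ℤ) - 1 + 1 = j by omega] at H
  rcases hbad with ⟨h1, h2, h3, h4⟩ | ⟨h1, h2, h3, h4⟩
  · rw [mem_dil_hsucc] at h1 h2
    rw [mem_dil_hsucc] at h3 h4
    push_neg at h3 h4
    rw [show (i:ℤ) - 1 - 1 = i - 2 by omega] at h1 h3
    have e1 : ((i:ℤ)-2, j-1) ∈ dil S s t := by tauto
    have e2 : ((i:ℤ), j) ∈ dil S s t := by tauto
    have hr := H (i-2) (Or.inl e1)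
      (by rw [show (i:ℤ) - 2 + 2 = i by omega]; exact Or.inr e2)
    rw [show (i:ℤ) - 2 + 1 = i - 1 by omega] at hr
    rcases hr with hh | hh
    · exact h4.2 hh
    · exact h3.1 hh
  · rw [mem_dil_hsucc] at h1 h2
    rw [mem_dil_hsucc] at h3 h4
    push_neg at h3 h4
    rw [show (i:ℤ) - 1 - 1 = i - 2 by omega] at h1 h3
    have e1 : ((i:ℤ)-2, j) ∈ dil S s t := by tauto
    have e2 : ((i:ℤ), j-1) ∈ dil S s t := by tauto
    have hr := H (i-2) (Or.inr e1)
      (by rw [show (i:ℤ) - 2 + 2 = i by omega]; exact Or.inl e2)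
    rw [show (i:ℤ) - 2 + 1 = i - 1 by omega] at hr
    rcases hr with hh | hh
    · exact h3.1 hh
    · exact h4.2 hh

/-- vertical dilatation of a column-admissible set is manifold-like. -/
theorem ML2 (S : Finset (ℤ × ℤ)) (s t : ℕ)
    (h : ∀ i : ℤ, NoGap1 (col (dil S s t) i ∪ col (dil S s t) (i+1))) :
    ManifoldLike (dil S s (t+1)) := by
  intro i j hbad
  have H := h (i-1)
  unfold NoGap1 at H
  simp only [col, Set.mem_union, Set.mem_setOf_eq, show (i:ℤ) - 1 + 1 = i by omega] at H
  rcases hbad with ⟨h1, h2, h3, h4⟩ | ⟨h1, h2, h3, h4⟩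
  · rw [mem_dil_vsucc] at h1 h2
    rw [mem_dil_vsucc] at h3 h4
    push_neg at h3 h4
    rw [show (j:ℤ) - 1 - 1 = j - 2 by omega] at h1 h4
    have e1 : ((i:ℤ)-1, j-2) ∈ dil S s t := by tauto
    have e2 : ((i:ℤ), j) ∈ dil S s t := by tauto
    have hr := H (j-2) (Or.inl e1)
      (by rw [show (j:ℤ) - 2 + 2 = j by omega]; exact Or.inr e2)
    rw [show (j:ℤ) - 2 + 1 = j - 1 by omega] at hr
    rcases hr with hh | hh
    · exact h3.2 hh
    · exact h4.1 hh
  · rw [mem_dil_vsucc] at h1 h2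
    rw [mem_dil_vsucc] at h3 h4
    push_neg at h3 h4
    rw [show (j:ℤ) - 1 - 1 = j - 2 by omega] at h2 h3
    have e1 : ((i:ℤ)-1, j) ∈ dil S s t := by tauto
    have e2 : ((i:ℤ), j-2) ∈ dil S s t := by tauto
    have hr := H (j-2) (Or.inr e2)
      (by rw [show (j:ℤ) - 2 + 2 = j by omega]; exact Or.inl e1)
    rw [show (j:ℤ) - 2 + 1 = j - 1 by omega] at hr
    rcases hr with hh | hh
    · exact h3.1 hh
    · exact h4.2 hh

end Stab17
namespace Stab17

/-- pure logic of the triple-column argument. -/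
theorem triple_logic (E : ℤ → ℤ → Prop) (x y : ℤ)
    (Q : ∀ w a : ℤ, E w a → E w (a+2) → E w (a+1))
    (P : ∀ w a : ℤ, (E w a ∨ E (w+1) a) → (E w (a+2) ∨ E (w+1) (a+2)) →
      (E w (a+1) ∨ E (w+1) (a+1)))
    (R : ∀ c a : ℤ, (E a c ∨ E a (c+1) ∨ E a (c+2)) →
      (E (a+2) c ∨ E (a+2) (c+1) ∨ E (a+2) (c+2)) →
      (E (a+1) c ∨ E (a+1) (c+1) ∨ E (a+1) (c+2)))
    (hy : E (x-1) y ∨ E x y ∨ E (x+1) y)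
    (hy2 : E (x-1) (y+2) ∨ E x (y+2) ∨ E (x+1) (y+2)) :
    E (x-1) (y+1) ∨ E x (y+1) ∨ E (x+1) (y+1) := by
  have ex : (x:ℤ) - 1 + 1 = x := by omega
  have ex2 : (x:ℤ) - 1 + 2 = x + 1 := by omega
  have Pl : ∀ a : ℤ, (E (x-1) a ∨ E x a) → (E (x-1) (a+2) ∨ E x (a+2)) →
      (E (x-1) (a+1) ∨ E x (a+1)) := by
    intro a u v
    have := P (x-1) a (by rw [ex]; exact u) (by rw [ex]; exact v)
    rwa [ex] at this
  have Rx : ∀ a : ℤ, (E (x-1) a ∨ E (x-1) (a+1) ∨ E (x-1) (a+2)) →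
      (E (x+1) a ∨ E (x+1) (a+1) ∨ E (x+1) (a+2)) →
      (E x a ∨ E x (a+1) ∨ E x (a+2)) := by
    intro a u v
    have := R a (x-1) u (by rw [ex2]; exact v)
    rwa [ex] at this
  rcases hy with p1 | p2 | p3 <;> rcases hy2 with q1 | q2 | q3
  · exact Or.inl (Q (x-1) y p1 q1)
  · have := Pl y (Or.inl p1) (Or.inr q2); tauto
  · by_cases hx : E x y
    · have := P x y (Or.inl hx) (Or.inr q3); tauto
    · by_cases hx2 : E x (y+2)
      · have := Pl y (Or.inl p1) (Or.inr hx2); tauto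
      · have := Rx y (Or.inl p1) (Or.inr (Or.inr q3))
        tauto
  · have := Pl y (Or.inr p2) (Or.inl q1); tauto
  · exact Or.inr (Or.inl (Q x y p2 q2))
  · have := P x y (Or.inl p2) (Or.inr q3); tauto
  · by_cases hx : E x y
    · have := Pl y (Or.inr hx) (Or.inl q1); tauto
    · by_cases hx2 : E x (y+2)
      · have := P x y (Or.inr p3) (Or.inl hx2); tauto
      · have := Rx y (Or.inr (Or.inr q1)) (Or.inl p3)
        tauto
  · have := P x y (Or.inr p3) (Or.inl q2); tauto
  · exact Or.inr (Or.inr (Q (x+1) y p3 q3))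

/-- column admissibility ascends through horizontal dilatation. -/
theorem colAdm_hdil (S : Finset (ℤ × ℤ)) (s t : ℕ)
    (hc : colAdmissible (dil S s t))
    (h3 : ∀ c : ℤ, NoGap1 (row (dil S s (t+1)) c ∪ row (dil S s (t+1)) (c+1))) :
    colAdmissible (dil S (s+1) t) := by
  rw [colAdmissible_iff] at hc ⊢
  intro x
  have Q : ∀ w a : ℤ, (w, a) ∈ dil S s t → (w, a+2) ∈ dil S s t → (w, a+1) ∈ dil S s t := by
    intro w a u v
    exact (hc w).1 a (by simpa [col] using u) (by simpa [col] using v)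
  have P : ∀ w a : ℤ, ((w, a) ∈ dil S s t ∨ (w+1, a) ∈ dil S s t) →
      ((w, a+2) ∈ dil S s t ∨ (w+1, a+2) ∈ dil S s t) →
      ((w, a+1) ∈ dil S s t ∨ (w+1, a+1) ∈ dil S s t) := by
    intro w a u v
    have := (hc w).2 a (by simpa [col, Set.mem_union] using u)
      (by simpa [col, Set.mem_union] using v)
    simpa [col, Set.mem_union] using this
  have R : ∀ c a : ℤ, ((a, c) ∈ dil S s t ∨ (a, c+1) ∈ dil S s t ∨ (a, c+2) ∈ dil S s t) →
      ((a+2, c) ∈ dil S s t ∨ (a+2, c+1) ∈ dil S s t ∨ (a+2, c+2) ∈ dil S s t) →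
      ((a+1, c) ∈ dil S s t ∨ (a+1, c+1) ∈ dil S s t ∨ (a+1, c+2) ∈ dil S s t) := by
    intro c a u v
    have key : ∀ z : ℤ, z ∈ row (dil S s (t+1)) (c+1) ∪ row (dil S s (t+1)) (c+1+1) ↔
        ((z, c) ∈ dil S s t ∨ (z, c+1) ∈ dil S s t ∨ (z, c+2) ∈ dil S s t) := by
      intro z
      simp only [row, Set.mem_union, Set.mem_setOf_eq, mem_dil_vsucc,
        show c + 1 - 1 = c by omega, show c + 1 + 1 = c + 2 by omega,
        show c + 2 - 1 = c + 1 by omega]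
      tauto
    have := h3 (c+1) a ((key a).2 u) ((key (a+2)).2 v)
    exact (key (a+1)).1 this
  constructor
  · -- single column of the bigger dilatation
    intro y hy hy2
    simp only [col, Set.mem_setOf_eq, mem_dil_hsucc] at hy hy2 ⊢
    rcases hy with u | u <;> rcases hy2 with v | v
    · exact Or.inl (Q x y u v)
    · have := P (x-1) y (Or.inr (by rwa [show (x:ℤ)-1+1 = x by omega])) (Or.inl v)
      rw [show (x:ℤ)-1+1 = x by omega] at this
      tauto
    · have := P (x-1) y (Or.inl u) (Or.inr (by rwa [show (x:ℤ)-1+1 = x by omega]))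
      rw [show (x:ℤ)-1+1 = x by omega] at this
      tauto
    · exact Or.inr (Q (x-1) y u v)
  · -- σ-pair of the bigger dilatation: triple columns
    intro y hy hy2
    simp only [col, Set.mem_union, Set.mem_setOf_eq, mem_dil_hsucc,
      show (x:ℤ) + 1 - 1 = x by omega] at hy hy2 ⊢
    have hy' : ((x:ℤ)-1, y) ∈ dil S s t ∨ (x, y) ∈ dil S s t ∨ (x+1, y) ∈ dil S s t := by
      rcases hy with (h | h) | (h | h)
      · exact Or.inr (Or.inl h)
      · exact Or.inl h
      · exact Or.inr (Or.inr h)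
      · exact Or.inr (Or.inl h)
    have hy2' : ((x:ℤ)-1, y+2) ∈ dil S s t ∨ (x, y+2) ∈ dil S s t ∨ (x+1, y+2) ∈ dil S s t := by
      rcases hy2 with (h | h) | (h | h)
      · exact Or.inr (Or.inl h)
      · exact Or.inl h
      · exact Or.inr (Or.inr h)
      · exact Or.inr (Or.inl h)
    have := triple_logic (fun a b => (a, b) ∈ dil S s t) x y Q P R hy' hy2'
    rcases this with h | h | h
    · exact Or.inl (Or.inr h)
    · exact Or.inl (Or.inl h)
    · exact Or.inr (Or.inl h)

theorem A2_zz (S : Finset (ℤ × ℤ)) : A2 0 0 S ↔ ManifoldLike S := by rw [A2]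

theorem A2_sl (k₁ k₂ : ℕ) (S : Finset (ℤ × ℤ)) :
    A2 (k₁+1) k₂ S ↔ A2 k₁ k₂ S ∧ A210 (dil S k₁ k₂) := by rw [A2]

theorem A2_sr (k₂ : ℕ) (S : Finset (ℤ × ℤ)) :
    A2 0 (k₂+1) S ↔ A2 0 k₂ S ∧ A201 (dil S 0 k₂) := by rw [A2]

/-- the symmetric bundle of atomic admissibility conditions. -/
def Bdl (S : Finset (ℤ × ℤ)) (K₁ K₂ : ℕ) : Prop :=
  (∀ s t : ℕ, s ≤ K₁ → t ≤ K₂ → ManifoldLike (dil S s t)) ∧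
  (∀ s t : ℕ, s < K₁ → t ≤ K₂ → rowAdmissible (dil S s t)) ∧
  (∀ s t : ℕ, s ≤ K₁ → t < K₂ → colAdmissible (dil S s t))

theorem Bdl_mono {S : Finset (ℤ × ℤ)} {K₁ K₂ K₁' K₂' : ℕ} (h : Bdl S K₁ K₂)
    (h1 : K₁' ≤ K₁) (h2 : K₂' ≤ K₂) : Bdl S K₁' K₂' :=
  ⟨fun s t hs ht => h.1 s t (le_trans hs h1) (le_trans ht h2),
   fun s t hs ht => h.2.1 s t (lt_of_lt_of_le hs h1) (le_trans ht h2),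
   fun s t hs ht => h.2.2 s t (le_trans hs h1) (lt_of_lt_of_le ht h2)⟩

theorem A2_to_Bdl : ∀ (k₁ k₂ : ℕ) (S : Finset (ℤ × ℤ)), A2 k₁ k₂ S → Bdl S k₁ k₂ := by
  intro k₁
  induction k₁ with
  | zero =>
    intro k₂
    induction k₂ with
    | zero =>
      intro S h
      rw [A2_zz] at h
      refine ⟨?_, ?_, ?_⟩
      · intro s t hs ht
        have hs0 : s = 0 := Nat.le_zero.mp hs
        have ht0 : t = 0 := Nat.le_zero.mp ht
        subst hs0; subst ht0
        exact h
      · intro s t hs _; exact absurd hs (Nat.not_lt_zero s)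
      · intro s t _ ht; exact absurd ht (Nat.not_lt_zero t)
    | succ k₂ ih =>
      intro S h
      have h' : A2 0 k₂ S ∧ A201 (dil S 0 k₂) := (A2_sr k₂ S).1 h
      have hB := ih S h'.1
      refine ⟨?_, ?_, ?_⟩
      · intro s t hs ht
        have hs0 : s = 0 := Nat.le_zero.mp hs
        subst hs0
        by_cases ht' : t ≤ k₂
        · exact hB.1 0 t le_rfl ht'
        · have : t = k₂ + 1 := by omega
          subst this
          exact ML2 S 0 k₂ (fun i => ((colAdmissible_iff _).1 h'.2.2 i).2)
      · intro s t hs _; exact absurd hs (Nat.not_lt_zero s)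
      · intro s t hs ht
        have hs0 : s = 0 := Nat.le_zero.mp hs
        subst hs0
        by_cases ht' : t < k₂
        · exact hB.2.2 0 t le_rfl ht'
        · have : t = k₂ := by omega
          subst this
          exact h'.2.2
  | succ k₁ ih =>
    intro k₂ S h
    have h' : A2 k₁ k₂ S ∧ A210 (dil S k₁ k₂) := (A2_sl k₁ k₂ S).1 h
    have hB := ih k₂ S h'.1
    have chain : ∀ t : ℕ, t ≤ k₂ → rowAdmissible (dil S k₁ t) := by
      have aux : ∀ (d t : ℕ), t + d = k₂ → rowAdmissible (dil S k₁ t) := by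
        intro d
        induction d with
        | zero =>
          intro t ht
          have : t = k₂ := by omega
          subst this
          exact h'.2.2
        | succ d ihd =>
          intro t ht
          apply core_row
          · intro c
            exact ((rowAdmissible_iff _).1 (ihd (t+1) (by omega)) c).1
          · intro x
            exact ((colAdmissible_iff _).1 (hB.2.2 k₁ t le_rfl (by omega)) x).1
      intro t ht
      exact aux (k₂ - t) t (by omega)
    refine ⟨?_, ?_, ?_⟩
    · intro s t hs ht
      by_cases hs' : s ≤ k₁
      · exact hB.1 s t hs' ht
      · have : s = k₁ + 1 := by omega
        subst this
        exact ML1 S k₁ t (fun c => ((rowAdmissible_iff _).1 (chain t ht) c).2)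
    · intro s t hs ht
      by_cases hs' : s < k₁
      · exact hB.2.1 s t hs' ht
      · have : s = k₁ := by omega
        subst this
        exact chain t ht
    · intro s t hs ht
      by_cases hs' : s ≤ k₁
      · exact hB.2.2 s t hs' ht
      · have : s = k₁ + 1 := by omega
        subst this
        exact colAdm_hdil S k₁ t (hB.2.2 k₁ t le_rfl ht)
          (fun c => ((rowAdmissible_iff _).1 (chain (t+1) (by omega)) c).2)

theorem Bdl_to_A2 : ∀ (k₁ k₂ : ℕ) (S : Finset (ℤ × ℤ)), Bdl S k₁ k₂ → A2 k₁ k₂ S := by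
  intro k₁
  induction k₁ with
  | zero =>
    intro k₂
    induction k₂ with
    | zero =>
      intro S hB
      exact (A2_zz S).2 (hB.1 0 0 le_rfl le_rfl)
    | succ k₂ ih =>
      intro S hB
      exact (A2_sr k₂ S).2 ⟨ih S (Bdl_mono hB le_rfl (Nat.le_succ k₂)),
        hB.1 0 k₂ le_rfl (Nat.le_succ k₂), hB.2.2 0 k₂ le_rfl (Nat.lt_succ_self k₂)⟩
  | succ k₁ ih =>
    intro k₂ S hB
    exact (A2_sl k₁ k₂ S).2 ⟨ih k₂ S (Bdl_mono hB (Nat.le_succ k₁) le_rfl),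
      hB.1 k₁ k₂ (Nat.le_succ k₁) le_rfl, hB.2.1 k₁ k₂ (Nat.lt_succ_self k₁) le_rfl⟩

end Stab17
namespace Stab17

/-- 1D stability of the gap condition under node insertion. -/
theorem L1 (n : ℤ) (A : Set ℤ) (s : ℤ) (hs : 0 ≤ s)
    (h : ∀ u : ℤ, 0 ≤ u → u ≤ s → NoGap1 {x : ℤ | ∃ m : ℤ, x - u ≤ m ∧ m ≤ x ∧ m ∈ A}) :
    NoGap1 {x : ℤ | ∃ m : ℤ, g n (x - s) ≤ m ∧ m ≤ g n x ∧ m ∈ A} := by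
  intro a ha ha2
  by_contra hn
  simp only [Set.mem_setOf_eq, not_exists, not_and] at hn ha ha2 ⊢
  obtain ⟨m₁, hm1a, hm1b, hm1A⟩ := ha
  obtain ⟨m₂, hm2a, hm2b, hm2A⟩ := ha2
  have hd1 : 1 - 1 ≤ g n (a + 1 - s) - g n (a + 1 - s - 1) ∧
      g n (a + 1 - s) - g n (a + 1 - s - 1) ≤ 1 := g_diff n (by omega)
  have e1 : a + 1 - s - 1 = a - s := by omega
  rw [e1] at hd1
  have hd2 : 1 - 1 ≤ g n (a + 2) - g n (a + 2 - 1) ∧ g n (a + 2) - g n (a + 2 - 1) ≤ 1 :=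
    g_diff n (by omega)
  have e2 : a + 2 - 1 = a + 1 := by omega
  rw [e2] at hd2
  have hd3 : s + 2 - 1 ≤ g n (a + 2) - g n (a + 2 - (s + 2)) ∧
      g n (a + 2) - g n (a + 2 - (s + 2)) ≤ s + 2 := g_diff n (by omega)
  have e3 : a + 2 - (s + 2) = a - s := by omega
  rw [e3] at hd3
  have hd4 : s - 1 ≤ g n (a + 1) - g n (a + 1 - s) ∧ g n (a + 1) - g n (a + 1 - s) ≤ s :=
    g_diff n (by omega)
  have hm5 : g n a ≤ g n (a + 1) := g_mono n (by omega)
  have hm6 : g n (a + 1 - s) ≤ g n (a + 2 - s) := g_mono n (by omega)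
  -- the left witness is one short of the refined window
  have k1 : m₁ < g n (a + 1 - s) := by
    by_contra hk
    exact hn m₁ (by omega) (by omega) hm1A
  -- the right witness is one past the refined window
  have k2 : g n (a + 1) < m₂ := by
    by_contra hk
    exact hn m₂ (by omega) (by omega) hm2A
  have hα : m₁ = g n (a + 1 - s) - 1 := by omega
  have hβ : m₂ = g n (a + 1) + 1 := by omega
  have gapfact : ∀ m : ℤ, m₁ < m → m < m₂ → m ∉ A := by
    intro m h1 h2
    exact hn m (by omega) (by omega)
  have hdich : m₂ - m₁ = s + 1 ∨ m₂ - m₁ = s + 2 := by omega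
  have hs0 : 1 ≤ s ∨ (s = 0 ∧ g n (a + 1 - s) = g n (a + 1)) := by
    by_cases h0 : s = 0
    · exact Or.inr ⟨h0, by rw [show a + 1 - s = a + 1 by omega]⟩
    · exact Or.inl (by omega)
  rcases hdich with hc | hc
  · -- short span: one flat step inside, uses level s - 1
    have hs1 : 1 ≤ s := by rcases hs0 with h0 | ⟨h0, h0'⟩ <;> omega
    have := h (s - 1) (by omega) (by omega) (m₁ + s - 1)
      ⟨m₁, by omega, by omega, hm1A⟩
      ⟨m₂, by omega, by omega, hm2A⟩
    obtain ⟨m, hma, hmb, hmA⟩ := this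
    exact gapfact m (by omega) (by omega) hmA
  · -- full span: uses level s
    have := h s (by omega) (by omega) (m₁ + s)
      ⟨m₁, by omega, by omega, hm1A⟩
      ⟨m₂, by omega, by omega, hm2A⟩
    obtain ⟨m, hma, hmb, hmA⟩ := this
    exact gapfact m (by omega) (by omega) hmA

/-- windows of plain dilatations, 1D form. -/
theorem row_dil_window (S : Finset (ℤ × ℤ)) (u t : ℕ) (c : ℤ) :
    row (dil S u t) c = {x : ℤ | ∃ m : ℤ, x - u ≤ m ∧ m ≤ x ∧ m ∈ {m' : ℤ | Ft S t m' c}} := by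
  ext x
  simp only [row, Set.mem_setOf_eq, mem_dil]

theorem rowAdm_insertCol (n : ℤ) (S : Finset (ℤ × ℤ)) (s t : ℕ)
    (h : ∀ u : ℕ, u ≤ s → rowAdmissible (dil S u t)) :
    rowAdmissible (dil (insertCol n S) s t) := by
  rw [rowAdmissible_iff]
  intro c
  constructor
  · have e : row (dil (insertCol n S) s t) c =
        {x : ℤ | ∃ m : ℤ, g n (x - s) ≤ m ∧ m ≤ g n x ∧ m ∈ {m' : ℤ | Ft S t m' c}} := by
      ext x
      simp only [row, Set.mem_setOf_eq, mem_dil_insertCol]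
    rw [e]
    apply L1 n _ s (by positivity)
    intro u hu0 hus
    have e2 : {x : ℤ | ∃ m : ℤ, x - u ≤ m ∧ m ≤ x ∧ m ∈ {m' : ℤ | Ft S t m' c}} =
        row (dil S u.toNat t) c := by
      rw [row_dil_window]
      ext x
      simp only [Set.mem_setOf_eq]
      constructor
      · rintro ⟨m, h1, h2, h3⟩; exact ⟨m, by omega, h2, h3⟩
      · rintro ⟨m, h1, h2, h3⟩; exact ⟨m, by omega, h2, h3⟩
    rw [e2]
    exact ((rowAdmissible_iff _).1 (h u.toNat (by omega)) c).1
  · have e : row (dil (insertCol n S) s t) c ∪ row (dil (insertCol n S) s t) (c+1) =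
        {x : ℤ | ∃ m : ℤ, g n (x - s) ≤ m ∧ m ≤ g n x ∧
          m ∈ {m' : ℤ | Ft S t m' c ∨ Ft S t m' (c+1)}} := by
      ext x
      simp only [row, Set.mem_union, Set.mem_setOf_eq, mem_dil_insertCol]
      constructor
      · rintro (⟨m, h1, h2, h3⟩ | ⟨m, h1, h2, h3⟩)
        · exact ⟨m, h1, h2, Or.inl h3⟩
        · exact ⟨m, h1, h2, Or.inr h3⟩
      · rintro ⟨m, h1, h2, h3 | h3⟩
        · exact Or.inl ⟨m, h1, h2, h3⟩
        · exact Or.inr ⟨m, h1, h2, h3⟩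
    rw [e]
    apply L1 n _ s (by positivity)
    intro u hu0 hus
    have e2 : {x : ℤ | ∃ m : ℤ, x - u ≤ m ∧ m ≤ x ∧
        m ∈ {m' : ℤ | Ft S t m' c ∨ Ft S t m' (c+1)}} =
        row (dil S u.toNat t) c ∪ row (dil S u.toNat t) (c+1) := by
      ext x
      simp only [row, Set.mem_union, Set.mem_setOf_eq, mem_dil]
      constructor
      · rintro ⟨m, h1, h2, h3 | h3⟩
        · exact Or.inl ⟨m, by omega, h2, h3⟩
        · exact Or.inr ⟨m, by omega, h2, h3⟩
      · rintro (⟨m, h1, h2, h3⟩ | ⟨m, h1, h2, h3⟩)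
        · exact ⟨m, by omega, h2, Or.inl h3⟩
        · exact ⟨m, by omega, h2, Or.inr h3⟩
    rw [e2]
    exact ((rowAdmissible_iff _).1 (h u.toNat (by omega)) c).2

end Stab17
namespace Stab17

theorem col_dil_window (S : Finset (ℤ × ℤ)) (u t : ℕ) (c : ℤ) :
    col (dil S u t) c = {y : ℤ | ∃ m : ℤ, c - (u:ℤ) ≤ m ∧ m ≤ c ∧ Ft S t m y} := by
  ext y
  simp only [col, Set.mem_setOf_eq, mem_dil]

theorem Manifold_insertCol (n : ℤ) (S : Finset (ℤ × ℤ)) (s t : ℕ)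
    (hM : ∀ u : ℕ, u ≤ s → ManifoldLike (dil S u t)) :
    ManifoldLike (dil (insertCol n S) s t) := by
  intro i j hbad
  have d1 := g_diff n (x := i) (k := 1) (by omega)
  have d2 := g_diff n (x := i - (s:ℤ)) (k := 1) (by omega)
  rw [show i - (s:ℤ) - 1 = i - 1 - (s:ℤ) by omega] at d2
  have dspan := g_diff n (x := i) (k := (s:ℤ)) (by positivity)
  by_cases c1 : g n (i-1) = g n i
  · -- right end flat: column i ⊆ column i-1
    have mono : ∀ y : ℤ, (i, y) ∈ dil (insertCol n S) s t →
        (i-1, y) ∈ dil (insertCol n S) s t := by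
      intro y hy
      rw [mem_dil_insertCol] at hy ⊢
      obtain ⟨m, h1, h2, h3⟩ := hy
      have := g_mono n (show i - 1 - (s:ℤ) ≤ i - (s:ℤ) by omega)
      exact ⟨m, by omega, by omega, h3⟩
    rcases hbad with ⟨h1, h2, h3, h4⟩ | ⟨h1, h2, h3, h4⟩
    · exact h3 (mono j h2)
    · exact h3 (mono (j-1) h2)
  · have c1' : g n i = g n (i-1) + 1 := by omega
    by_cases c2 : g n (i - 1 - (s:ℤ)) = g n (i - (s:ℤ))
    · -- left end flat: column i-1 ⊆ column i
      have mono : ∀ y : ℤ, (i-1, y) ∈ dil (insertCol n S) s t →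
          (i, y) ∈ dil (insertCol n S) s t := by
        intro y hy
        rw [mem_dil_insertCol] at hy ⊢
        obtain ⟨m, h1, h2, h3⟩ := hy
        exact ⟨m, by omega, by omega, h3⟩
      rcases hbad with ⟨h1, h2, h3, h4⟩ | ⟨h1, h2, h3, h4⟩
      · exact h4 (mono (j-1) h1)
      · exact h4 (mono j h1)
    · have c2' : g n (i - (s:ℤ)) = g n (i - 1 - (s:ℤ)) + 1 := by omega
      by_cases cf : g n (i - (s:ℤ)) = g n i - (s:ℤ)
      · -- full window: reduce to level s at column g n i
        have A : ∀ y : ℤ, (i, y) ∈ dil (insertCol n S) s t ↔ (g n i, y) ∈ dil S s t := by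
          intro y
          rw [mem_dil_insertCol, mem_dil]
          constructor <;> rintro ⟨m, h1, h2, h3⟩ <;> exact ⟨m, by omega, h2, h3⟩
        have B : ∀ y : ℤ, (i-1, y) ∈ dil (insertCol n S) s t ↔
            (g n i - 1, y) ∈ dil S s t := by
          intro y
          rw [mem_dil_insertCol, mem_dil]
          constructor <;> rintro ⟨m, h1, h2, h3⟩ <;> exact ⟨m, by omega, by omega, h3⟩
        apply hM s le_rfl (g n i) j
        rcases hbad with ⟨h1, h2, h3, h4⟩ | ⟨h1, h2, h3, h4⟩
        · exact Or.inl ⟨(B (j-1)).1 h1, (A j).1 h2,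
            fun hh => h3 ((B j).2 hh), fun hh => h4 ((A (j-1)).2 hh)⟩
        · exact Or.inr ⟨(B j).1 h1, (A (j-1)).1 h2,
            fun hh => h3 ((B (j-1)).2 hh), fun hh => h4 ((A j).2 hh)⟩
      · -- short window: reduce to level s - 1 at column g n i
        have cs : g n (i - (s:ℤ)) = g n i - (s:ℤ) + 1 := by omega
        cases s with
        | zero =>
          exact absurd (by push_cast; rw [sub_zero, sub_zero]) cf
        | succ s' =>
          have A : ∀ y : ℤ, (i, y) ∈ dil (insertCol n S) (s'+1) t ↔
              (g n i, y) ∈ dil S s' t := by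
            intro y
            rw [mem_dil_insertCol, mem_dil]
            push_cast at cs ⊢
            constructor <;> rintro ⟨m, h1, h2, h3⟩ <;> exact ⟨m, by omega, h2, h3⟩
          have B : ∀ y : ℤ, (i-1, y) ∈ dil (insertCol n S) (s'+1) t ↔
              (g n i - 1, y) ∈ dil S s' t := by
            intro y
            rw [mem_dil_insertCol, mem_dil]
            push_cast at cs c2' ⊢
            constructor <;> rintro ⟨m, h1, h2, h3⟩ <;> exact ⟨m, by omega, by omega, h3⟩
          apply hM s' (by omega) (g n i) j
          rcases hbad with ⟨h1, h2, h3, h4⟩ | ⟨h1, h2, h3, h4⟩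
          · exact Or.inl ⟨(B (j-1)).1 h1, (A j).1 h2,
              fun hh => h3 ((B j).2 hh), fun hh => h4 ((A (j-1)).2 hh)⟩
          · exact Or.inr ⟨(B j).1 h1, (A (j-1)).1 h2,
              fun hh => h3 ((B (j-1)).2 hh), fun hh => h4 ((A j).2 hh)⟩

theorem colAdm_insertCol (n : ℤ) (S : Finset (ℤ × ℤ)) (s t : ℕ)
    (h : ∀ u : ℕ, u ≤ s → colAdmissible (dil S u t)) :
    colAdmissible (dil (insertCol n S) s t) := by
  rw [colAdmissible_iff]
  intro x
  have dspan := g_diff n (x := x) (k := (s:ℤ)) (by positivity)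
  constructor
  · -- single column
    by_cases cf : g n (x - (s:ℤ)) = g n x - (s:ℤ)
    · have e : col (dil (insertCol n S) s t) x = col (dil S s t) (g n x) := by
        ext y
        simp only [col, Set.mem_setOf_eq]
        rw [mem_dil_insertCol, mem_dil]
        constructor <;> rintro ⟨m, h1, h2, h3⟩ <;> exact ⟨m, by omega, h2, h3⟩
      rw [e]
      exact ((colAdmissible_iff _).1 (h s le_rfl) (g n x)).1
    · have cs : g n (x - (s:ℤ)) = g n x - (s:ℤ) + 1 := by omega
      cases s with
      | zero => exact absurd (by push_cast; rw [sub_zero, sub_zero]) cf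
      | succ s' =>
        have e : col (dil (insertCol n S) (s'+1) t) x = col (dil S s' t) (g n x) := by
          ext y
          simp only [col, Set.mem_setOf_eq]
          rw [mem_dil_insertCol, mem_dil]
          push_cast at cs ⊢
          constructor <;> rintro ⟨m, h1, h2, h3⟩ <;> exact ⟨m, by omega, h2, h3⟩
        rw [e]
        exact ((colAdmissible_iff _).1 (h s' (by omega)) (g n x)).1
  · -- σ-pair : union of two consecutive refined columns
    have dspan' := g_diff n (x := x + 1) (k := (s:ℤ) + 1) (by positivity)
    rw [show x + 1 - ((s:ℤ) + 1) = x - (s:ℤ) by omega] at dspan'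
    have hm1 : g n x ≤ g n (x+1) := g_mono n (by omega)
    have hm2 : g n (x + 1 - (s:ℤ)) ≤ g n (x + 1) := g_mono n (by omega)
    have hm3 : g n (x - (s:ℤ)) ≤ g n (x + 1 - (s:ℤ)) := g_mono n (by omega)
    have d1 := g_diff n (x := x + 1) (k := 1) (by omega)
    rw [show x + 1 - 1 = x by omega] at d1
    have d2 := g_diff n (x := x + 1 - (s:ℤ)) (k := 1) (by omega)
    rw [show x + 1 - (s:ℤ) - 1 = x - (s:ℤ) by omega] at d2
    -- union of windows is one window
    have e0 : col (dil (insertCol n S) s t) x ∪ col (dil (insertCol n S) s t) (x+1) =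
        {y : ℤ | ∃ m : ℤ, g n (x - (s:ℤ)) ≤ m ∧ m ≤ g n (x+1) ∧ Ft S t m y} := by
      ext y
      simp only [col, Set.mem_union, Set.mem_setOf_eq, mem_dil_insertCol]
      constructor
      · rintro (⟨m, h1, h2, h3⟩ | ⟨m, h1, h2, h3⟩)
        · exact ⟨m, by omega, by omega, h3⟩
        · exact ⟨m, by omega, by omega, h3⟩
      · rintro ⟨m, h1, h2, h3⟩
        by_cases hxm : m ≤ g n x
        · exact Or.inl ⟨m, by omega, by omega, h3⟩
        · exact Or.inr ⟨m, by omega, by omega, h3⟩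
    rw [e0]
    by_cases cb : g n (x+1) - g n (x - (s:ℤ)) = (s:ℤ) + 1
    · -- the union is a pair of consecutive plain columns
      have e : {y : ℤ | ∃ m : ℤ, g n (x - (s:ℤ)) ≤ m ∧ m ≤ g n (x+1) ∧ Ft S t m y} =
          col (dil S s t) (g n (x+1) - 1) ∪ col (dil S s t) (g n (x+1) - 1 + 1) := by
        ext y
        simp only [col, Set.mem_union, Set.mem_setOf_eq, mem_dil]
        constructor
        · rintro ⟨m, h1, h2, h3⟩
          by_cases hxm : g n (x+1) - (s:ℤ) ≤ m
          · exact Or.inr ⟨m, by omega, by omega, h3⟩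
          · exact Or.inl ⟨m, by omega, by omega, h3⟩
        · rintro (⟨m, h1, h2, h3⟩ | ⟨m, h1, h2, h3⟩)
          · exact ⟨m, by omega, by omega, h3⟩
          · exact ⟨m, by omega, by omega, h3⟩
      rw [e]
      exact ((colAdmissible_iff _).1 (h s le_rfl) (g n (x+1) - 1)).2
    · -- the union is a single plain column
      have cb' : g n (x+1) - g n (x - (s:ℤ)) = (s:ℤ) := by omega
      have e : {y : ℤ | ∃ m : ℤ, g n (x - (s:ℤ)) ≤ m ∧ m ≤ g n (x+1) ∧ Ft S t m y} =
          col (dil S s t) (g n (x+1)) := by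
        ext y
        simp only [col, Set.mem_setOf_eq, mem_dil]
        constructor <;> rintro ⟨m, h1, h2, h3⟩ <;> exact ⟨m, by omega, h2, h3⟩
      rw [e]
      exact ((colAdmissible_iff _).1 (h s le_rfl) (g n (x+1))).1

theorem Bdl_insertCol (n : ℤ) (S : Finset (ℤ × ℤ)) (K₁ K₂ : ℕ)
    (h : Bdl S K₁ K₂) : Bdl (insertCol n S) K₁ K₂ := by
  refine ⟨?_, ?_, ?_⟩
  · intro s t hs ht
    exact Manifold_insertCol n S s t (fun u hu => h.1 u t (le_trans hu hs) ht)
  · intro s t hs ht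
    exact rowAdm_insertCol n S s t (fun u hu => h.2.1 u t (lt_of_le_of_lt hu hs) ht)
  · intro s t hs ht
    exact colAdm_insertCol n S s t (fun u hu => h.2.2 u t (le_trans hu hs) ht)
end Stab17
namespace Stab17

/-! ### transposition -/

def tr (S : Finset (ℤ × ℤ)) : Finset (ℤ × ℤ) := S.image Prod.swap

theorem mem_tr (S : Finset (ℤ × ℤ)) (x y : ℤ) : (x, y) ∈ tr S ↔ (y, x) ∈ S := by
  unfold tr
  simp only [Finset.mem_image]
  constructor
  · rintro ⟨⟨p1, p2⟩, hp, heq⟩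
    have h1 : p2 = x := by have := congrArg Prod.fst heq; simpa using this
    have h2 : p1 = y := by have := congrArg Prod.snd heq; simpa using this
    subst h1; subst h2; exact hp
  · intro h
    exact ⟨(y, x), h, rfl⟩

theorem tr_tr (S : Finset (ℤ × ℤ)) : tr (tr S) = S := by
  ext ⟨x, y⟩
  rw [mem_tr, mem_tr]

theorem tr_insertRow (n : ℤ) (S : Finset (ℤ × ℤ)) :
    tr (insertRow n S) = insertCol n (tr S) := by
  ext ⟨x, y⟩
  rw [mem_tr, mem_insertRow, mem_insertCol, mem_tr]

theorem dil_tr (S : Finset (ℤ × ℤ)) (s t : ℕ) :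
    dil (tr S) s t = tr (dil S t s) := by
  ext ⟨x, y⟩
  rw [mem_tr, mem_dil, mem_dil]
  unfold Ft
  constructor
  · rintro ⟨m, h1, h2, v, hv0, hvt, hm⟩
    rw [mem_tr] at hm
    refine ⟨y - v, by omega, by omega, x - m, by omega, by omega, ?_⟩
    have e : x - (x - m) = m := by omega
    rw [e]
    exact hm
  · rintro ⟨m, h1, h2, v, hv0, hvt, hm⟩
    refine ⟨x - v, by omega, by omega, y - m, by omega, by omega, ?_⟩
    rw [mem_tr]
    have e : y - (y - m) = m := by omega
    rw [e]
    exact hm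

theorem Manifold_tr (S : Finset (ℤ × ℤ)) (h : ManifoldLike S) : ManifoldLike (tr S) := by
  intro i j hbad
  apply h j i
  simp only [mem_tr] at hbad
  tauto

theorem row_tr (S : Finset (ℤ × ℤ)) (j : ℤ) : row (tr S) j = col S j := by
  ext x
  simp only [row, col, Set.mem_setOf_eq, mem_tr]

theorem col_tr (S : Finset (ℤ × ℤ)) (i : ℤ) : col (tr S) i = row S i := by
  ext y
  simp only [row, col, Set.mem_setOf_eq, mem_tr]

theorem Bdl_tr (S : Finset (ℤ × ℤ)) (K₁ K₂ : ℕ) (h : Bdl S K₁ K₂) : Bdl (tr S) K₂ K₁ := by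
  refine ⟨?_, ?_, ?_⟩
  · intro s t hs ht
    rw [dil_tr]
    exact Manifold_tr _ (h.1 t s ht hs)
  · intro s t hs ht
    rw [dil_tr]
    rw [rowAdmissible_iff]
    intro c
    have := (colAdmissible_iff _).1 (h.2.2 t s ht hs) c
    rw [row_tr, row_tr] at *
    exact this
  · intro s t hs ht
    rw [dil_tr]
    rw [colAdmissible_iff]
    intro c
    have := (rowAdmissible_iff _).1 (h.2.1 t s ht hs) c
    rw [col_tr, col_tr] at *
    exact this

theorem Bdl_insertRow (n : ℤ) (S : Finset (ℤ × ℤ)) (K₁ K₂ : ℕ)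
    (h : Bdl S K₁ K₂) : Bdl (insertRow n S) K₁ K₂ := by
  have h1 := Bdl_insertCol n (tr S) K₂ K₁ (Bdl_tr S K₁ K₂ h)
  rw [← tr_insertRow] at h1
  have h2 := Bdl_tr _ _ _ h1
  rwa [tr_tr] at h2

theorem A2_applyOp (k₁ k₂ : ℕ) (S : Finset (ℤ × ℤ)) (o : Bool × ℤ)
    (h : A2 k₁ k₂ S) : A2 k₁ k₂ (applyOp o S) := by
  have hB := A2_to_Bdl k₁ k₂ S h
  unfold applyOp
  by_cases ho : o.1
  · rw [if_pos ho]
    exact Bdl_to_A2 k₁ k₂ _ (Bdl_insertCol o.2 S k₁ k₂ hB)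
  · rw [if_neg ho]
    exact Bdl_to_A2 k₁ k₂ _ (Bdl_insertRow o.2 S k₁ k₂ hB)

end Stab17
namespace Stab17

theorem g_lb (n a x : ℤ) : a ≤ g n x ↔ (if n < a then a + 1 else a) ≤ x := by
  rcases g_cases n x with ⟨h, e⟩ | ⟨h, e⟩ <;> split_ifs <;> omega

theorem g_ub (n b x : ℤ) : g n x ≤ b ↔ x ≤ (if n ≤ b then b + 1 else b) := by
  rcases g_cases n x with ⟨h, e⟩ | ⟨h, e⟩ <;> split_ifs <;> omega

theorem g_inner_lb (n a x : ℤ) (h : a + 1 ≤ g n x) : (if n < a then a + 1 else a) + 1 ≤ x := by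
  rcases g_cases n x with ⟨h', e⟩ | ⟨h', e⟩ <;> split_ifs <;> omega

theorem g_inner_ub (n b x : ℤ) (h : g n x ≤ b - 1) : x ≤ (if n ≤ b then b + 1 else b) - 1 := by
  rcases g_cases n x with ⟨h', e⟩ | ⟨h', e⟩ <;> split_ifs <;> omega

theorem A2_insertCol (n : ℤ) (k₁ k₂ : ℕ) (S : Finset (ℤ × ℤ)) (h : A2 k₁ k₂ S) :
    A2 k₁ k₂ (insertCol n S) :=
  Bdl_to_A2 k₁ k₂ _ (Bdl_insertCol n S k₁ k₂ (A2_to_Bdl k₁ k₂ S h))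

theorem A2_insertRow (n : ℤ) (k₁ k₂ : ℕ) (S : Finset (ℤ × ℤ)) (h : A2 k₁ k₂ S) :
    A2 k₁ k₂ (insertRow n S) :=
  Bdl_to_A2 k₁ k₂ _ (Bdl_insertRow n S k₁ k₂ (A2_to_Bdl k₁ k₂ S h))

theorem Atilde_insertCol (n : ℤ) (k₁ k₂ : ℕ) (S : Finset (ℤ × ℤ))
    (h : Atilde k₁ k₂ S) : Atilde k₁ k₂ (insertCol n S) := by
  obtain ⟨a₁, b₁, a₂, b₂, hsub, hA⟩ := h
  refine ⟨if n < a₁ then a₁ + 1 else a₁, if n ≤ b₁ then b₁ + 1 else b₁, a₂, b₂, ?_, ?_⟩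
  · intro p hp
    obtain ⟨x, y⟩ := p
    rw [mem_insertCol] at hp
    have := hsub hp
    rw [Finset.mem_product, Finset.mem_Icc, Finset.mem_Icc] at this ⊢
    obtain ⟨⟨u1, u2⟩, u3⟩ := this
    exact ⟨⟨g_inner_lb n a₁ x u1, g_inner_ub n b₁ x u2⟩, u3⟩
  · have e : ((Finset.Icc (if n < a₁ then a₁ + 1 else a₁) (if n ≤ b₁ then b₁ + 1 else b₁)) ×ˢ
        (Finset.Icc a₂ b₂)) \ insertCol n S =
        insertCol n (((Finset.Icc a₁ b₁) ×ˢ (Finset.Icc a₂ b₂)) \ S) := by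
      ext ⟨x, y⟩
      simp only [Finset.mem_sdiff, mem_insertCol, Finset.mem_product, Finset.mem_Icc]
      have h1 := g_lb n a₁ x
      have h2 := g_ub n b₁ x
      tauto
    rw [e]
    exact A2_insertCol n k₁ k₂ _ hA

theorem Atilde_insertRow (n : ℤ) (k₁ k₂ : ℕ) (S : Finset (ℤ × ℤ))
    (h : Atilde k₁ k₂ S) : Atilde k₁ k₂ (insertRow n S) := by
  obtain ⟨a₁, b₁, a₂, b₂, hsub, hA⟩ := h
  refine ⟨a₁, b₁, if n < a₂ then a₂ + 1 else a₂, if n ≤ b₂ then b₂ + 1 else b₂, ?_, ?_⟩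
  · intro p hp
    obtain ⟨x, y⟩ := p
    rw [mem_insertRow] at hp
    have := hsub hp
    rw [Finset.mem_product, Finset.mem_Icc, Finset.mem_Icc] at this ⊢
    obtain ⟨u1, ⟨u2, u3⟩⟩ := this
    exact ⟨u1, ⟨g_inner_lb n a₂ y u2, g_inner_ub n b₂ y u3⟩⟩
  · have e : ((Finset.Icc a₁ b₁) ×ˢ
        (Finset.Icc (if n < a₂ then a₂ + 1 else a₂) (if n ≤ b₂ then b₂ + 1 else b₂))) \
        insertRow n S =
        insertRow n (((Finset.Icc a₁ b₁) ×ˢ (Finset.Icc a₂ b₂)) \ S) := by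
      ext ⟨x, y⟩
      simp only [Finset.mem_sdiff, mem_insertRow, Finset.mem_product, Finset.mem_Icc]
      have h1 := g_lb n a₂ y
      have h2 := g_ub n b₂ y
      tauto
    rw [e]
    exact A2_insertRow n k₁ k₂ _ hA

theorem step_applyOp (k₁ k₂ : ℕ) (S : Finset (ℤ × ℤ)) (o : Bool × ℤ) :
    (A2 k₁ k₂ S → A2 k₁ k₂ (applyOp o S)) ∧
    (Atilde k₁ k₂ S → Atilde k₁ k₂ (applyOp o S)) := by
  unfold applyOp
  by_cases ho : o.1
  · rw [if_pos ho]
    exact ⟨A2_insertCol o.2 k₁ k₂ S, Atilde_insertCol o.2 k₁ k₂ S⟩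
  · rw [if_neg ho]
    exact ⟨A2_insertRow o.2 k₁ k₂ S, Atilde_insertRow o.2 k₁ k₂ S⟩

end Stab17

/-- Stability of `A²_{k₁,k₂}` and `Ã²_{k₁,k₂}` under insertion of finitely many new
vertical and horizontal grid lines. -/
theorem stmt17 (k₁ k₂ : ℕ) (S : Finset (ℤ × ℤ)) (L : List (Bool × ℤ)) :
    (A2 k₁ k₂ S → A2 k₁ k₂ (L.foldl (fun T o => applyOp o T) S)) ∧
    (Atilde k₁ k₂ S → Atilde k₁ k₂ (L.foldl (fun T o => applyOp o T) S)) := by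
  induction L generalizing S with
  | nil => exact ⟨id, id⟩
  | cons o L ih =>
    rw [List.foldl_cons]
    exact ⟨fun h => (ih (applyOp o S)).1 ((Stab17.step_applyOp k₁ k₂ S o).1 h),
      fun h => (ih (applyOp o S)).2 ((Stab17.step_applyOp k₁ k₂ S o).2 h)⟩
end
end

section
/- Weighted partition of unity for hierarchical B-splines: under the hypotheses Ω⁰ ∈ A²_{m−1,n−1} with respect to G⁰, Ω^ℓ ∈ Ã²_{m,n} with respect to G^{ℓ−1} for ℓ = 1,…,N−1, and ∂Ω⁰ ∩ ∂Ω¹ = ∅, there exist strictly positive weights w_τ > 0 for τ in the hierarchical B-spline family K(H) such that Σ_{τ ∈ K(H)} w_τ · τ|_{Ω⁰} = 1 on Ω⁰. -/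
open Set

noncomputable section

/-- Mixed smoothness `C^{m−1,n−1}`: the function is `C^{m−1}` in `x` along every
horizontal slice of the domain and `C^{n−1}` in `y` along every vertical slice. -/
def SmoothMixed (m n : ℕ) (g : ℝ → ℝ → ℝ) (Ω : Set (ℝ × ℝ)) : Prop :=
  (∀ y : ℝ, ContDiffOn ℝ (↑(m - 1) : ℕ∞) (fun x => g x y) {x | (x, y) ∈ Ω}) ∧
  (∀ x : ℝ, ContDiffOn ℝ (↑(n - 1) : ℕ∞) (fun y => g x y) {y | (x, y) ∈ Ω})

/-- `g` coincides on the set `C` with a polynomial of bidegree at most `(m, n)`. -/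
def PolyOn (m n : ℕ) (g : ℝ → ℝ → ℝ) (C : Set (ℝ × ℝ)) : Prop :=
  ∃ q : MvPolynomial (Fin 2) ℝ, MvPolynomial.degreeOf 0 q ≤ m ∧
    MvPolynomial.degreeOf 1 q ≤ n ∧
    ∀ z ∈ C, g z.1 z.2 = MvPolynomial.eval ![z.1, z.2] q

/-- A cell of the level-`ℓ` dyadic grid `Gℓ`, indexed by its lower-left corner. -/
def cellL (ℓ : ℕ) (p : ℤ × ℤ) : Set (ℝ × ℝ) :=
  Set.Icc ((p.1 : ℝ) / 2 ^ ℓ) ((p.1 + 1) / 2 ^ ℓ) ×ˢ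
    Set.Icc ((p.2 : ℝ) / 2 ^ ℓ) ((p.2 + 1) / 2 ^ ℓ)

/-- The domain formed by the level-`ℓ` cells with indices in `S`. -/
def cellUL (ℓ : ℕ) (S : Finset (ℤ × ℤ)) : Set (ℝ × ℝ) := ⋃ p ∈ S, cellL ℓ p

/-- The cardinal B-spline of degree `m` with support `[0, m+1]` and integer knots. -/
def cardinalB (m : ℕ) (x : ℝ) : ℝ :=
  (∑ i ∈ Finset.range (m + 2),
    (-1 : ℝ) ^ i * ((m + 1).choose i) * (max (x - i) 0) ^ m) / (m.factorial)

/-- The level-`ℓ` tensor-product B-spline of bidegree `(m,n)` indexed by `q`. -/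
def Bs (m n ℓ : ℕ) (q : ℤ × ℤ) (z : ℝ × ℝ) : ℝ :=
  cardinalB m (2 ^ ℓ * z.1 - q.1) * cardinalB n (2 ^ ℓ * z.2 - q.2)

/-- The support of the level-`ℓ` tensor-product B-spline indexed by `q`. -/
def suppL (m n ℓ : ℕ) (q : ℤ × ℤ) : Set (ℝ × ℝ) :=
  Set.Icc ((q.1 : ℝ) / 2 ^ ℓ) ((q.1 + m + 1) / 2 ^ ℓ) ×ˢ
    Set.Icc ((q.2 : ℝ) / 2 ^ ℓ) ((q.2 + n + 1) / 2 ^ ℓ)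

/-- Kraft's selection: level-`ℓ` B-splines whose support does not meet `int R^{ℓ−1}`
but meets `int R^ℓ` (for `ℓ = 0`, `R^{−1} = ∅`). Here `RS ℓ` is the set of level-`ℓ`
cells of `R^ℓ = Ω⁰ \ Ω^{ℓ+1}`. -/
def Kset (m n : ℕ) (RS : ℕ → Finset (ℤ × ℤ)) : ℕ → Set (ℤ × ℤ)
  | 0 => {q | (suppL m n 0 q ∩ interior (cellUL 0 (RS 0))).Nonempty}
  | ℓ + 1 => {q | suppL m n (ℓ + 1) q ∩ interior (cellUL ℓ (RS ℓ)) = ∅ ∧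
      (suppL m n (ℓ + 1) q ∩ interior (cellUL (ℓ + 1) (RS (ℓ + 1)))).Nonempty}

/-- The index set of the hierarchical B-splines `K = ⋃_{ℓ<N} K^ℓ`. -/
def IndH (m n N : ℕ) (RS : ℕ → Finset (ℤ × ℤ)) : Set (ℕ × (ℤ × ℤ)) :=
  {x | x.1 < N ∧ x.2 ∈ Kset m n RS x.1}

/-- The spline space `S_{m,n}(H)` over the hierarchical T-mesh: `C^{m−1,n−1}` functions
on `Ω⁰` that are polynomials of bidegree `(m,n)` on each cell of the hierarchical mesh
(the level-`ℓ` cells lying in `Ωℓ` whose interiors avoid `Ω^{ℓ+1}`). -/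
def SplineSetH (m n N : ℕ) (S : ℕ → Finset (ℤ × ℤ)) : Set (↥(cellUL 0 (S 0)) → ℝ) :=
  {f | ∃ g : ℝ → ℝ → ℝ, SmoothMixed m n g (cellUL 0 (S 0)) ∧
    (∀ ℓ < N, ∀ p : ℤ × ℤ, cellL ℓ p ⊆ cellUL ℓ (S ℓ) →
      interior (cellL ℓ p) ∩ cellUL (ℓ + 1) (S (ℓ + 1)) = ∅ → PolyOn m n g (cellL ℓ p)) ∧
    ∀ z : ↥(cellUL 0 (S 0)), f z = g z.1.1 z.1.2}

/-!
The weights are obtained by running the construction of the hierarchical basis on the constant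
function `1`. On `Ω⁰` the level-`0` B-splines whose supports meet `int Ω⁰` sum to one. At
level `ℓ` a B-spline whose support meets `int R^ℓ` is kept (it belongs to `K^ℓ`); one whose
support avoids `int R^ℓ` is replaced, through the two-scale relation, by its children of
level `ℓ + 1` with positive binomial coefficients. The weighted sum stays equal to one on `Ω⁰`,
the children that do not vanish there are exactly the B-splines considered at the next level,
and at level `N` none is left.

Positivity of the weights is the geometric part: every B-spline considered at level `ℓ + 1 < N`
has a replaced parent at level `ℓ`. Its support avoids `int R^ℓ`, so by connectedness, and since
`∂Ω⁰ ∩ ∂Ω¹ = ∅`, it lies in `Ω^{ℓ+1}`. The level-`ℓ` cells it covers then form a rectangle inside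
`Ω^{ℓ+1}`, and `Ω^{ℓ+1} ∈ Ã²_{m,n}` (through the gap conditions it imposes on the rows and
columns of the dilated complement) extends this rectangle to an `(m + 1) × (n + 1)` block
inside `Ω^{ℓ+1}`: the support of the parent.
-/

open Finset

namespace HierarchicalBSpline

/-! ### Cardinal B-splines -/

def translate (h : ℝ) : Module.End ℝ (ℝ → ℝ) := LinearMap.funLeft ℝ ℝ (· - h)

@[simp] lemma translate_apply (h : ℝ) (f : ℝ → ℝ) (x : ℝ) : translate h f x = f (x - h) := rfl

lemma translate_pow (h : ℝ) (k : ℕ) : translate h ^ k = translate (k * h) := by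
  induction k with
  | zero => ext f x; simp
  | succ k ih =>
    ext f x
    rw [pow_succ, Module.End.mul_apply, ih]
    simp only [translate_apply]
    push_cast
    ring_nf

lemma pow_translate_apply (h : ℝ) (k : ℕ) (f : ℝ → ℝ) (x : ℝ) :
    (translate h ^ k) f x = f (x - k * h) := by
  rw [translate_pow, translate_apply]

lemma one_sub_translate_pow_apply (h : ℝ) (M : ℕ) (f : ℝ → ℝ) (x : ℝ) :
    ((1 - translate h) ^ M) f x =
      ∑ i ∈ range (M + 1), (-1) ^ i * (M.choose i : ℝ) * f (x - i * h) := by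
  rw [sub_eq_neg_add, (Commute.one_right (-translate h)).add_pow, LinearMap.sum_apply,
    Finset.sum_apply]
  refine Finset.sum_congr rfl fun i _ => ?_
  rw [← neg_one_smul ℝ (translate h), smul_pow, one_pow, mul_one, Module.End.mul_apply]
  simp [pow_translate_apply, Module.End.natCast_apply, mul_assoc]

lemma one_add_translate_pow_apply (h : ℝ) (M : ℕ) (f : ℝ → ℝ) (x : ℝ) :
    ((1 + translate h) ^ M) f x = ∑ i ∈ range (M + 1), (M.choose i : ℝ) * f (x - i * h) := by
  rw [add_comm, (Commute.one_right (translate h)).add_pow, LinearMap.sum_apply,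
    Finset.sum_apply]
  refine Finset.sum_congr rfl fun i _ => ?_
  simp [pow_translate_apply]

def truncPow (m : ℕ) (y : ℝ) : ℝ := max y 0 ^ m

lemma truncPow_two_mul (m : ℕ) (y : ℝ) : truncPow m (2 * y) = 2 ^ m * truncPow m y := by
  rw [truncPow, truncPow, ← mul_pow, mul_max_of_nonneg _ _ zero_le_two, mul_zero]

/-- With `τ = translate 1`, the partition of unity and the two-scale relation become the
polynomial identities `(1 + τ + ⋯ + τ ^ m) (1 - τ) ^ (m + 1) = (1 - τ ^ (m + 1)) (1 - τ) ^ m` and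
`(1 + τ) ^ (m + 1) (1 - τ) ^ (m + 1) = (1 - τ ^ 2) ^ (m + 1)`. -/
lemma cardinalB_eq_one_sub_translate_pow (m : ℕ) (x : ℝ) :
    cardinalB m x = ((1 - translate 1) ^ (m + 1)) (truncPow m) x / m.factorial := by
  simp [cardinalB, truncPow, one_sub_translate_pow_apply]

lemma sum_range_choose_mul_eq_fwdDiff_iter (f : ℝ → ℝ) (M : ℕ) (x : ℝ) :
    ∑ i ∈ range (M + 1), (-1) ^ i * (M.choose i : ℝ) * f (x - i) = (fwdDiff 1)^[M] f (x - M) := by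
  rw [fwdDiff_iter_eq_sum_shift, ← Finset.sum_range_reflect]
  refine Finset.sum_congr rfl fun i hi => ?_
  have hi : i ≤ M := Nat.lt_succ_iff.mp (Finset.mem_range.mp hi)
  rw [Nat.add_sub_cancel, Nat.choose_symm hi, zsmul_eq_mul, nsmul_one]
  push_cast [hi]
  ring_nf

lemma one_sub_translate_pow_truncPow_of_le (m M : ℕ) {x : ℝ} (hx : (M : ℝ) ≤ x) :
    ((1 - translate 1) ^ M) (truncPow m) x = (fwdDiff 1)^[M] (· ^ m) (x - M) := by
  rw [one_sub_translate_pow_apply, ← sum_range_choose_mul_eq_fwdDiff_iter]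
  refine Finset.sum_congr rfl fun i hi => ?_
  have : (i : ℝ) ≤ M := by exact_mod_cast Nat.lt_succ_iff.mp (Finset.mem_range.mp hi)
  rw [truncPow, mul_one, max_eq_left (by linarith)]

lemma one_sub_translate_pow_truncPow_of_nonpos {m : ℕ} (hm : m ≠ 0) (M : ℕ) {x : ℝ}
    (hx : x ≤ 0) : ((1 - translate 1) ^ M) (truncPow m) x = 0 := by
  refine (one_sub_translate_pow_apply 1 M _ x).trans (Finset.sum_eq_zero fun i _ => ?_)
  rw [truncPow, max_eq_right (by linarith [(i.cast_nonneg : (0 : ℝ) ≤ i)]), zero_pow hm,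
    mul_zero]

lemma cardinalB_eq_zero_of_nonpos {m : ℕ} (hm : m ≠ 0) {x : ℝ} (hx : x ≤ 0) :
    cardinalB m x = 0 := by
  rw [cardinalB_eq_one_sub_translate_pow, one_sub_translate_pow_truncPow_of_nonpos hm _ hx,
    zero_div]

lemma cardinalB_eq_zero_of_le {m : ℕ} {x : ℝ} (hx : (m : ℝ) + 1 ≤ x) : cardinalB m x = 0 := by
  rw [cardinalB_eq_one_sub_translate_pow,
    one_sub_translate_pow_truncPow_of_le m (m + 1) (by exact_mod_cast hx),
    fwdDiff_iter_pow_eq_zero_of_lt (Nat.lt_succ_self m), Pi.zero_apply, zero_div]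

lemma pos_lt_of_cardinalB_ne_zero {m : ℕ} (hm : m ≠ 0) {x : ℝ} (h : cardinalB m x ≠ 0) :
    0 < x ∧ x < m + 1 :=
  ⟨not_le.mp fun hx => h (cardinalB_eq_zero_of_nonpos hm hx),
    not_le.mp fun hx => h (cardinalB_eq_zero_of_le hx)⟩

lemma sum_range_cardinalB_eq_one {m : ℕ} (hm : m ≠ 0) {y : ℝ} (h₁ : (m : ℝ) ≤ y)
    (h₂ : y < m + 1) : ∑ j ∈ range (m + 1), cardinalB m (y - j) = 1 := by
  set T := translate 1
  have key : (∑ j ∈ range (m + 1), T ^ j) * (1 - T) ^ (m + 1) =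
      (1 - T ^ (m + 1)) * (1 - T) ^ m := by
    rw [pow_succ', ← mul_assoc, geom_sum_mul_neg]
  have hkey := congrArg (fun E : Module.End ℝ (ℝ → ℝ) => E (truncPow m) y) key
  simp only [Module.End.mul_apply, LinearMap.sum_apply, Finset.sum_apply, LinearMap.sub_apply,
    Module.End.one_apply, Pi.sub_apply, T, pow_translate_apply, mul_one] at hkey
  -- the `m`-th difference of `y ^ m` is `m!`; the shifted term only sees `truncPow m` on `x ≤ 0`
  rw [one_sub_translate_pow_truncPow_of_le m m h₁, fwdDiff_iter_eq_factorial,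
    one_sub_translate_pow_truncPow_of_nonpos hm _ (by push_cast; linarith)] at hkey
  simp only [cardinalB_eq_one_sub_translate_pow, ← Finset.sum_div, hkey]
  simp [Nat.factorial_ne_zero]

lemma finsum_cardinalB_sub_eq_one {m : ℕ} (hm : m ≠ 0) (u : ℝ) :
    ∑ᶠ k : ℤ, cardinalB m (u - k) = 1 := by
  have hinj : Set.InjOn (fun j : ℕ => ⌊u⌋ - m + j) (Finset.range (m + 1)) := fun i _ j _ h => by
    simpa using h
  rw [finsum_eq_sum_of_support_subset (s := (Finset.range (m + 1)).image fun j : ℕ => ⌊u⌋ - m + j),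
    Finset.sum_image hinj, ← sum_range_cardinalB_eq_one hm (y := u - ⌊u⌋ + m)
      (by linarith [Int.floor_le u]) (by linarith [Int.lt_floor_add_one u])]
  · refine Finset.sum_congr rfl fun j _ => ?_
    push_cast
    ring_nf
  · intro k hk
    obtain ⟨h₁, h₂⟩ := pos_lt_of_cardinalB_ne_zero hm hk
    have e₁ : k ≤ ⌊u⌋ := Int.le_floor.mpr (by linarith)
    have e₂ : ⌊u⌋ < k + m + 1 := Int.floor_lt.mpr (by push_cast; linarith)
    simp only [Finset.coe_image, Finset.coe_range, Set.mem_image, Set.mem_Iio]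
    exact ⟨(k - (⌊u⌋ - m)).toNat, by omega, by omega⟩

lemma cardinalB_two_scale (m : ℕ) (t : ℝ) :
    cardinalB m t =
      ∑ i ∈ range (m + 2), ((m + 1).choose i : ℝ) / 2 ^ m * cardinalB m (2 * t - i) := by
  have hcomm : Commute (1 + translate 1) (1 - translate 1) :=
    (Commute.one_right _).sub_right ((Commute.one_left _).add_left (Commute.refl _))
  have key : (1 + translate 1) ^ (m + 1) * (1 - translate 1) ^ (m + 1) =
      (1 - translate 2) ^ (m + 1) := by
    rw [← hcomm.mul_pow, show (2 : ℝ) = (2 : ℕ) * 1 by norm_num, ← translate_pow]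
    simp only [add_mul, mul_sub, one_mul, mul_one, sq]
    abel_nf
  have hkey := congrArg (fun E : Module.End ℝ (ℝ → ℝ) => E (truncPow m) (2 * t)) key
  simp only [Module.End.mul_apply, one_add_translate_pow_apply, one_sub_translate_pow_apply,
    mul_one] at hkey
  have hdil : ∑ i ∈ range (m + 1 + 1),
        (-1) ^ i * ((m + 1).choose i : ℝ) * truncPow m (2 * t - i * 2) =
      2 ^ m * ∑ i ∈ range (m + 1 + 1),
        (-1) ^ i * ((m + 1).choose i : ℝ) * truncPow m (t - i) := by
    rw [Finset.mul_sum]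
    refine Finset.sum_congr rfl fun i _ => ?_
    rw [show 2 * t - i * 2 = 2 * (t - i) by ring, truncPow_two_mul]
    ring
  rw [hdil] at hkey
  simp only [cardinalB_eq_one_sub_translate_pow, one_sub_translate_pow_apply, mul_one]
  rw [← mul_div_mul_left _ _ (pow_ne_zero m two_ne_zero), ← hkey, Finset.sum_div]
  refine Finset.sum_congr rfl fun i _ => ?_
  field_simp

/-! ### Tensor-product B-splines on dyadic grids -/

lemma finsum_mul_finsum {α β : Type*} {f : α → ℝ} {g : β → ℝ} (hf : (Function.support f).Finite)
    (hg : (Function.support g).Finite) :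
    ∑ᶠ p : α × β, f p.1 * g p.2 = (∑ᶠ a, f a) * ∑ᶠ b, g b := by
  rw [finsum_eq_sum_of_support_subset f hf.coe_toFinset.ge,
    finsum_eq_sum_of_support_subset g hg.coe_toFinset.ge, Finset.sum_mul_sum,
    ← Finset.sum_product', finsum_eq_sum_of_support_subset (s := hf.toFinset ×ˢ hg.toFinset)]
  intro p hp
  rw [Function.mem_support, mul_ne_zero_iff] at hp
  simpa using hp

lemma mem_suppL {m n ℓ : ℕ} {q : ℤ × ℤ} {z : ℝ × ℝ} :
    z ∈ suppL m n ℓ q ↔ ((q.1 : ℝ) ≤ 2 ^ ℓ * z.1 ∧ 2 ^ ℓ * z.1 ≤ q.1 + m + 1) ∧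
      ((q.2 : ℝ) ≤ 2 ^ ℓ * z.2 ∧ 2 ^ ℓ * z.2 ≤ q.2 + n + 1) := by
  have h : (0 : ℝ) < 2 ^ ℓ := by positivity
  simp only [suppL, mem_prod, Set.mem_Icc, div_le_iff₀ h, le_div_iff₀ h, mul_comm]

lemma mem_interior_suppL {m n ℓ : ℕ} {q : ℤ × ℤ} {z : ℝ × ℝ} :
    z ∈ interior (suppL m n ℓ q) ↔ ((q.1 : ℝ) < 2 ^ ℓ * z.1 ∧ 2 ^ ℓ * z.1 < q.1 + m + 1) ∧
      ((q.2 : ℝ) < 2 ^ ℓ * z.2 ∧ 2 ^ ℓ * z.2 < q.2 + n + 1) := by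
  have h : (0 : ℝ) < 2 ^ ℓ := by positivity
  simp only [suppL, interior_prod_eq, interior_Icc, mem_prod, Set.mem_Ioo, div_lt_iff₀ h,
    lt_div_iff₀ h, mul_comm]

lemma mem_cellL {ℓ : ℕ} {p : ℤ × ℤ} {z : ℝ × ℝ} :
    z ∈ cellL ℓ p ↔ ((p.1 : ℝ) ≤ 2 ^ ℓ * z.1 ∧ 2 ^ ℓ * z.1 ≤ p.1 + 1) ∧
      ((p.2 : ℝ) ≤ 2 ^ ℓ * z.2 ∧ 2 ^ ℓ * z.2 ≤ p.2 + 1) := by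
  have h : (0 : ℝ) < 2 ^ ℓ := by positivity
  simp only [cellL, mem_prod, Set.mem_Icc, div_le_iff₀ h, le_div_iff₀ h, mul_comm]

lemma mem_interior_cellL {ℓ : ℕ} {p : ℤ × ℤ} {z : ℝ × ℝ} :
    z ∈ interior (cellL ℓ p) ↔ ((p.1 : ℝ) < 2 ^ ℓ * z.1 ∧ 2 ^ ℓ * z.1 < p.1 + 1) ∧
      ((p.2 : ℝ) < 2 ^ ℓ * z.2 ∧ 2 ^ ℓ * z.2 < p.2 + 1) := by
  have h : (0 : ℝ) < 2 ^ ℓ := by positivity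
  simp only [cellL, interior_prod_eq, interior_Icc, mem_prod, Set.mem_Ioo, div_lt_iff₀ h,
    lt_div_iff₀ h, mul_comm]

lemma closure_interior_Icc_prod_Icc {a b c d : ℝ} (hab : a < b) (hcd : c < d) :
    closure (interior (Icc a b ×ˢ Icc c d)) = Icc a b ×ˢ Icc c d := by
  rw [interior_prod_eq, interior_Icc, interior_Icc, closure_prod_eq, closure_Ioo hab.ne,
    closure_Ioo hcd.ne]

lemma closure_interior_suppL (m n ℓ : ℕ) (q : ℤ × ℤ) :
    closure (interior (suppL m n ℓ q)) = suppL m n ℓ q := by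
  have h : ∀ (a : ℤ) (k : ℕ), (a : ℝ) / 2 ^ ℓ < (a + k + 1) / 2 ^ ℓ := fun a k =>
    div_lt_div_of_pos_right (by linarith [(k.cast_nonneg : (0 : ℝ) ≤ k)]) (by positivity)
  exact closure_interior_Icc_prod_Icc (h _ _) (h _ _)

lemma closure_interior_cellL (ℓ : ℕ) (p : ℤ × ℤ) :
    closure (interior (cellL ℓ p)) = cellL ℓ p := by
  have h : ∀ a : ℤ, (a : ℝ) / 2 ^ ℓ < (a + 1) / 2 ^ ℓ := fun a =>
    div_lt_div_of_pos_right (by linarith) (by positivity)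
  exact closure_interior_Icc_prod_Icc (h _) (h _)

lemma isPreconnected_interior_suppL (m n ℓ : ℕ) (q : ℤ × ℤ) :
    IsPreconnected (interior (suppL m n ℓ q)) :=
  ((convex_Icc _ _).prod (convex_Icc _ _)).interior.isPreconnected

lemma mem_interior_suppL_of_Bs_ne_zero {m n ℓ : ℕ} (hm : m ≠ 0) (hn : n ≠ 0) {q : ℤ × ℤ}
    {z : ℝ × ℝ} (h : Bs m n ℓ q z ≠ 0) : z ∈ interior (suppL m n ℓ q) := by
  rw [Bs, mul_ne_zero_iff] at h
  obtain ⟨h₁, h₂⟩ := pos_lt_of_cardinalB_ne_zero hm h.1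
  obtain ⟨h₃, h₄⟩ := pos_lt_of_cardinalB_ne_zero hn h.2
  rw [mem_interior_suppL]
  refine ⟨⟨?_, ?_⟩, ?_, ?_⟩ <;> linarith

lemma finsum_Bs_eq_one {m n : ℕ} (hm : m ≠ 0) (hn : n ≠ 0) (ℓ : ℕ) (z : ℝ × ℝ) :
    ∑ᶠ q : ℤ × ℤ, Bs m n ℓ q z = 1 := by
  have h₁ := finsum_cardinalB_sub_eq_one hm (2 ^ ℓ * z.1)
  have h₂ := finsum_cardinalB_sub_eq_one hn (2 ^ ℓ * z.2)
  simp only [Bs]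
  rw [finsum_mul_finsum (hasFiniteSupport_of_finsum_eq_one h₁)
    (hasFiniteSupport_of_finsum_eq_one h₂), h₁, h₂, mul_one]

lemma suppL_inter_interior_nonempty {m n ℓ : ℕ} (hm : m ≠ 0) (hn : n ≠ 0)
    {Ω : Set (ℝ × ℝ)} (hΩcl : Ω ⊆ closure (interior Ω)) {q : ℤ × ℤ} {z : ℝ × ℝ} (hz : z ∈ Ω)
    (h : Bs m n ℓ q z ≠ 0) : (suppL m n ℓ q ∩ interior Ω).Nonempty := by
  obtain ⟨w, hw, hwΩ⟩ := mem_closure_iff.mp (hΩcl hz) _ isOpen_interior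
    (mem_interior_suppL_of_Bs_ne_zero hm hn h)
  exact ⟨w, interior_subset hw, hwΩ⟩

def children (m n : ℕ) (q : ℤ × ℤ) : Finset (ℤ × ℤ) :=
  Finset.Icc (2 * q.1) (2 * q.1 + m + 1) ×ˢ Finset.Icc (2 * q.2) (2 * q.2 + n + 1)

lemma mem_children {m n : ℕ} {q r : ℤ × ℤ} :
    r ∈ children m n q ↔ (2 * q.1 ≤ r.1 ∧ r.1 ≤ 2 * q.1 + m + 1) ∧
      (2 * q.2 ≤ r.2 ∧ r.2 ≤ 2 * q.2 + n + 1) := by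
  rw [children, Finset.mem_product, Finset.mem_Icc, Finset.mem_Icc]

lemma children_eq_image (m n : ℕ) (q : ℤ × ℤ) :
    children m n q = (range (m + 2) ×ˢ range (n + 2)).image
      fun ij => (2 * q.1 + ij.1, 2 * q.2 + ij.2) := by
  ext r
  simp only [mem_children, Finset.mem_image, Finset.mem_product, Finset.mem_range, Prod.ext_iff]
  constructor
  · rintro ⟨⟨h₁, h₂⟩, h₃, h₄⟩
    exact ⟨((r.1 - 2 * q.1).toNat, (r.2 - 2 * q.2).toNat), by omega⟩
  · rintro ⟨ij, ⟨h₁, h₂⟩, h₃, h₄⟩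
    omega

def binomWeight (m : ℕ) (d : ℤ) : ℝ :=
  if 0 ≤ d then ((m + 1).choose d.toNat : ℝ) / 2 ^ m else 0

def twoScaleCoeff (m n : ℕ) (q r : ℤ × ℤ) : ℝ :=
  binomWeight m (r.1 - 2 * q.1) * binomWeight n (r.2 - 2 * q.2)

lemma binomWeight_nonneg (m : ℕ) (d : ℤ) : 0 ≤ binomWeight m d := by
  unfold binomWeight
  split_ifs <;> positivity

lemma binomWeight_pos {m : ℕ} {d : ℤ} (h₀ : 0 ≤ d) (h₁ : d ≤ m + 1) : 0 < binomWeight m d := by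
  rw [binomWeight, if_pos h₀]
  exact div_pos (Nat.cast_pos.mpr (Nat.choose_pos (by omega))) (by positivity)

lemma binomWeight_eq_zero {m : ℕ} {d : ℤ} (h : ¬(0 ≤ d ∧ d ≤ m + 1)) : binomWeight m d = 0 := by
  unfold binomWeight
  split_ifs with h₀
  · rw [Nat.choose_eq_zero_of_lt (by omega), Nat.cast_zero, zero_div]
  · rfl

lemma twoScaleCoeff_nonneg (m n : ℕ) (q r : ℤ × ℤ) : 0 ≤ twoScaleCoeff m n q r :=
  mul_nonneg (binomWeight_nonneg _ _) (binomWeight_nonneg _ _)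

lemma twoScaleCoeff_pos {m n : ℕ} {q r : ℤ × ℤ} (hr : r ∈ children m n q) :
    0 < twoScaleCoeff m n q r := by
  rw [mem_children] at hr
  exact mul_pos (binomWeight_pos (by omega) (by omega)) (binomWeight_pos (by omega) (by omega))

lemma twoScaleCoeff_eq_zero {m n : ℕ} {q r : ℤ × ℤ} (hr : r ∉ children m n q) :
    twoScaleCoeff m n q r = 0 := by
  rw [mem_children] at hr
  by_cases h : 0 ≤ r.1 - 2 * q.1 ∧ r.1 - 2 * q.1 ≤ m + 1
  · rw [twoScaleCoeff, binomWeight_eq_zero (m := n) (by omega), mul_zero]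
  · rw [twoScaleCoeff, binomWeight_eq_zero h, zero_mul]

lemma Bs_two_scale (m n ℓ : ℕ) (q : ℤ × ℤ) (z : ℝ × ℝ) :
    Bs m n ℓ q z = ∑ r ∈ children m n q, twoScaleCoeff m n q r * Bs m n (ℓ + 1) r z := by
  have hinj : Set.InjOn (fun ij : ℕ × ℕ => (2 * q.1 + ij.1, 2 * q.2 + ij.2))
      ↑(range (m + 2) ×ˢ range (n + 2)) := fun a _ b _ h => by
    simp only [Prod.ext_iff] at h ⊢
    omega
  rw [children_eq_image, Finset.sum_image hinj, Finset.sum_product, Bs,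
    cardinalB_two_scale m, cardinalB_two_scale n, Finset.sum_mul_sum]
  refine Finset.sum_congr rfl fun i _ => Finset.sum_congr rfl fun j _ => ?_
  simp only [twoScaleCoeff, binomWeight, Bs, add_sub_cancel_left, Nat.cast_nonneg, if_true,
    Int.toNat_natCast, pow_succ]
  push_cast
  ring_nf

lemma suppL_succ_subset_of_mem_children {m n ℓ : ℕ} {q r : ℤ × ℤ} (hr : r ∈ children m n q) :
    suppL m n (ℓ + 1) r ⊆ suppL m n ℓ q := by
  intro z hz
  rw [mem_children] at hr
  have e₁ : (2 * q.1 : ℝ) ≤ r.1 ∧ (r.1 : ℝ) ≤ 2 * q.1 + m + 1 := by exact_mod_cast hr.1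
  have e₂ : (2 * q.2 : ℝ) ≤ r.2 ∧ (r.2 : ℝ) ≤ 2 * q.2 + n + 1 := by exact_mod_cast hr.2
  rw [mem_suppL, pow_succ] at hz
  rw [mem_suppL]
  refine ⟨⟨?_, ?_⟩, ?_, ?_⟩ <;> linarith

/-! ### Dyadic cells -/

lemma mem_cellUL {ℓ : ℕ} {S : Finset (ℤ × ℤ)} {z : ℝ × ℝ} :
    z ∈ cellUL ℓ S ↔ ∃ p ∈ S, z ∈ cellL ℓ p := by
  simp [cellUL]

lemma cellL_subset_cellUL {ℓ : ℕ} {S : Finset (ℤ × ℤ)} {p : ℤ × ℤ} (hp : p ∈ S) :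
    cellL ℓ p ⊆ cellUL ℓ S :=
  subset_biUnion_of_mem (u := fun p => cellL ℓ p) hp

lemma isCompact_cellUL (ℓ : ℕ) (S : Finset (ℤ × ℤ)) : IsCompact (cellUL ℓ S) :=
  S.isCompact_biUnion fun _ _ => isCompact_Icc.prod isCompact_Icc

lemma isClosed_cellUL (ℓ : ℕ) (S : Finset (ℤ × ℤ)) : IsClosed (cellUL ℓ S) :=
  (isCompact_cellUL ℓ S).isClosed

lemma cellUL_subset_closure_interior (ℓ : ℕ) (S : Finset (ℤ × ℤ)) :
    cellUL ℓ S ⊆ closure (interior (cellUL ℓ S)) := by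
  intro z hz
  obtain ⟨p, hp, hzp⟩ := mem_cellUL.mp hz
  rw [← closure_interior_cellL] at hzp
  exact closure_mono (interior_mono (cellL_subset_cellUL hp)) hzp

lemma eq_of_mem_interior_cellL {ℓ : ℕ} {p p' : ℤ × ℤ} {z : ℝ × ℝ}
    (h : z ∈ interior (cellL ℓ p)) (h' : z ∈ cellL ℓ p') : p' = p := by
  rw [mem_interior_cellL] at h
  rw [mem_cellL] at h'
  have e₁ : (p'.1 : ℝ) < p.1 + 1 ∧ (p.1 : ℝ) < p'.1 + 1 := ⟨by linarith, by linarith⟩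
  have e₂ : (p'.2 : ℝ) < p.2 + 1 ∧ (p.2 : ℝ) < p'.2 + 1 := ⟨by linarith, by linarith⟩
  norm_cast at e₁ e₂
  exact Prod.ext (by omega) (by omega)

lemma mem_of_mem_interior_cellL {ℓ : ℕ} {p : ℤ × ℤ} {S : Finset (ℤ × ℤ)} {z : ℝ × ℝ}
    (h : z ∈ interior (cellL ℓ p)) (hS : z ∈ cellUL ℓ S) : p ∈ S := by
  obtain ⟨p', hp', hz⟩ := mem_cellUL.mp hS
  rwa [← eq_of_mem_interior_cellL h hz]

lemma exists_int_mem_Icc_of_mem_Icc {a b : ℤ} (hab : a < b) {y : ℝ} (h₁ : (a : ℝ) ≤ y)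
    (h₂ : y ≤ b) : ∃ i : ℤ, a ≤ i ∧ i < b ∧ (i : ℝ) ≤ y ∧ y ≤ i + 1 := by
  refine ⟨min ⌊y⌋ (b - 1), le_min (Int.le_floor.mpr h₁) (by omega), by omega, ?_, ?_⟩
  · exact (Int.cast_le.mpr (min_le_left _ _)).trans (Int.floor_le y)
  · rcases le_total ⌊y⌋ (b - 1) with h | h
    · rw [min_eq_left h]; exact (Int.lt_floor_add_one y).le
    · rw [min_eq_right h]; push_cast; linarith

lemma exists_dyadic_subinterval (k : ℕ) {a : ℤ} {y : ℝ} (h₁ : (a : ℝ) ≤ y) (h₂ : y ≤ a + 1) :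
    ∃ i : ℤ, ((i : ℝ) ≤ 2 ^ k * y ∧ 2 ^ k * y ≤ i + 1) ∧
      ∀ x : ℝ, (i : ℝ) ≤ 2 ^ k * x → 2 ^ k * x ≤ i + 1 → (a : ℝ) ≤ x ∧ x ≤ a + 1 := by
  have hk : (0 : ℝ) < 2 ^ k := by positivity
  have hlt : 2 ^ k * a < 2 ^ k * (a + 1) := by
    have : (0 : ℤ) < 2 ^ k := by positivity
    linarith
  obtain ⟨i, hi₁, hi₂, hi₃, hi₄⟩ := exists_int_mem_Icc_of_mem_Icc hlt (y := 2 ^ k * y)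
    (by push_cast; nlinarith) (by push_cast; nlinarith)
  have e₁ : (2 ^ k * a : ℝ) ≤ i := by exact_mod_cast hi₁
  have e₂ : (i : ℝ) + 1 ≤ 2 ^ k * (a + 1) := by exact_mod_cast (by omega : i + 1 ≤ 2 ^ k * (a + 1))
  refine ⟨i, ⟨hi₃, hi₄⟩, fun x hx₁ hx₂ => ⟨?_, ?_⟩⟩
  · exact le_of_mul_le_mul_left (by linarith) hk
  · exact le_of_mul_le_mul_left (by linarith) hk

lemma exists_cellL_subset (ℓ k : ℕ) {p : ℤ × ℤ} {z : ℝ × ℝ} (hz : z ∈ cellL ℓ p) :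
    ∃ p', z ∈ cellL (ℓ + k) p' ∧ cellL (ℓ + k) p' ⊆ cellL ℓ p := by
  rw [mem_cellL] at hz
  obtain ⟨i, hi, hi'⟩ := exists_dyadic_subinterval k hz.1.1 hz.1.2
  obtain ⟨j, hj, hj'⟩ := exists_dyadic_subinterval k hz.2.1 hz.2.2
  refine ⟨(i, j), ?_, fun w hw => ?_⟩
  · rw [mem_cellL, pow_add, mul_comm (2 ^ ℓ : ℝ), mul_assoc, mul_assoc]
    exact ⟨hi, hj⟩
  · rw [mem_cellL, pow_add, mul_comm (2 ^ ℓ : ℝ), mul_assoc, mul_assoc] at hw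
    rw [mem_cellL]
    exact ⟨hi' _ hw.1.1 hw.1.2, hj' _ hw.2.1 hw.2.2⟩

lemma suppL_subset_cellUL {m n ℓ : ℕ} {q : ℤ × ℤ} {S : Finset (ℤ × ℤ)}
    (h : ∀ i j, q.1 ≤ i → i ≤ q.1 + m → q.2 ≤ j → j ≤ q.2 + n → (i, j) ∈ S) :
    suppL m n ℓ q ⊆ cellUL ℓ S := by
  intro z hz
  rw [mem_suppL] at hz
  obtain ⟨i, hi₁, hi₂, hi₃, hi₄⟩ := exists_int_mem_Icc_of_mem_Icc (b := q.1 + m + 1)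
    (by omega) hz.1.1 (by push_cast; linarith)
  obtain ⟨j, hj₁, hj₂, hj₃, hj₄⟩ := exists_int_mem_Icc_of_mem_Icc (b := q.2 + n + 1)
    (by omega) hz.2.1 (by push_cast; linarith)
  exact cellL_subset_cellUL (h i j hi₁ (by omega) hj₁ (by omega))
    (mem_cellL.mpr ⟨⟨hi₃, hi₄⟩, hj₃, hj₄⟩)

lemma exists_mem_Ioo_two_mul_mem_Icc {i r : ℤ} {k : ℕ} (h₁ : r ≤ 2 * i + 1) (h₂ : 2 * i ≤ r + k) :
    ∃ x : ℝ, ((i : ℝ) < x ∧ x < i + 1) ∧ ((r : ℝ) ≤ 2 * x ∧ 2 * x ≤ r + k + 1) := by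
  have hc : (2 * i : ℝ) ≤ max (2 * i) r ∧ ((max (2 * i) r : ℤ) : ℝ) ≤ 2 * i + 1 ∧
      (r : ℝ) ≤ max (2 * i) r ∧ ((max (2 * i) r : ℤ) : ℝ) ≤ r + k := by
    refine ⟨?_, ?_, ?_, ?_⟩ <;> exact_mod_cast (by omega)
  refine ⟨((max (2 * i) r : ℤ) + 1 / 2) / 2, ⟨?_, ?_⟩, ?_, ?_⟩ <;> linarith

lemma interior_cellL_inter_suppL_succ_nonempty {m n ℓ : ℕ} {r : ℤ × ℤ} {i j : ℤ}
    (hi₁ : r.1 ≤ 2 * i + 1) (hi₂ : 2 * i ≤ r.1 + m) (hj₁ : r.2 ≤ 2 * j + 1)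
    (hj₂ : 2 * j ≤ r.2 + n) : (interior (cellL ℓ (i, j)) ∩ suppL m n (ℓ + 1) r).Nonempty := by
  obtain ⟨x, hx, hx'⟩ := exists_mem_Ioo_two_mul_mem_Icc hi₁ hi₂
  obtain ⟨y, hy, hy'⟩ := exists_mem_Ioo_two_mul_mem_Icc hj₁ hj₂
  have hℓ : (2 : ℝ) ^ ℓ ≠ 0 := by positivity
  refine ⟨(x / 2 ^ ℓ, y / 2 ^ ℓ), ?_, ?_⟩
  · rw [mem_interior_cellL]
    simpa [mul_div_cancel₀ _ hℓ] using ⟨hx, hy⟩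
  · rw [mem_suppL, pow_succ]
    simpa [mul_comm _ (2 : ℝ), ← mul_assoc, mul_div_cancel₀ _ hℓ, mul_assoc] using ⟨hx', hy'⟩

lemma finite_setOf_suppL_inter_nonempty (m n ℓ : ℕ) {X : Set (ℝ × ℝ)}
    (hX : Bornology.IsBounded X) : {q : ℤ × ℤ | (suppL m n ℓ q ∩ X).Nonempty}.Finite := by
  obtain ⟨R, hR⟩ := hX.subset_closedBall 0
  set M : ℤ := ⌈2 ^ ℓ * R⌉ + m + n + 1 with hM
  have hbound : ∀ (a : ℤ) (t : ℝ) (k : ℕ), k ≤ m + n → |t| ≤ R → (a : ℝ) ≤ 2 ^ ℓ * t →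
      2 ^ ℓ * t ≤ a + k + 1 → -M ≤ a ∧ a ≤ M := by
    intro a t k hk ht h₁ h₂
    have hc := Int.le_ceil (2 ^ ℓ * R)
    have habs := abs_le.mp ht
    have hk' : (k : ℝ) ≤ m + n := by exact_mod_cast hk
    have hℓ : (0 : ℝ) < 2 ^ ℓ := by positivity
    have e₁ : (a : ℝ) ≤ ⌈2 ^ ℓ * R⌉ := by nlinarith
    have e₂ : -(⌈2 ^ ℓ * R⌉ : ℝ) - m - n - 1 ≤ a := by nlinarith
    have e₁' : a ≤ ⌈2 ^ ℓ * R⌉ := by exact_mod_cast e₁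
    have e₂' : -⌈2 ^ ℓ * R⌉ - m - n - 1 ≤ a := by exact_mod_cast e₂
    omega
  refine (Finset.Icc (-M, -M) (M, M)).finite_toSet.subset ?_
  rintro q ⟨z, hz, hzX⟩
  have hz' : ‖z‖ ≤ R := mem_closedBall_zero_iff.mp (hR hzX)
  rw [mem_suppL] at hz
  have h₁ := hbound q.1 z.1 m (by omega) ((norm_fst_le z).trans hz') hz.1.1 hz.1.2
  have h₂ := hbound q.2 z.2 n (by omega) ((norm_snd_le z).trans hz') hz.2.1 hz.2.2
  simp only [Finset.coe_Icc, Set.mem_Icc]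
  exact ⟨⟨h₁.1, h₂.1⟩, h₁.2, h₂.2⟩

/-! ### Nested domains -/

-- `interior K ∩ interior Ω` lies in `F`: off `F` it is an open subset of `R`, which `K` avoids.
-- Its closure in `interior K` thus lies in `F ⊆ interior Ω`, so by connectedness it is all of
-- `interior K`.
lemma subset_of_isPreconnected_interior {X : Type*} [TopologicalSpace X] {K Ω F R : Set X}
    (hK : IsPreconnected (interior K)) (hKcl : closure (interior K) = K) (hF : IsClosed F)
    (hFΩ : F ⊆ interior Ω) (hΩ : Ω ⊆ R ∪ F) (hKR : K ∩ interior R = ∅)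
    (hKΩ : (K ∩ interior Ω).Nonempty) : K ⊆ F := by
  have hsubF : interior K ∩ interior Ω ⊆ F := by
    intro v hv
    by_contra hvF
    have hO : interior K ∩ interior Ω ∩ Fᶜ ⊆ interior R := interior_maximal
      (fun w hw => (hΩ (interior_subset hw.1.2)).resolve_right hw.2)
      ((isOpen_interior.inter isOpen_interior).inter hF.isOpen_compl)
    exact (hKR.subset ⟨interior_subset hv.1, hO ⟨hv, hvF⟩⟩ : v ∈ (∅ : Set X))
  have hmeet : (interior K ∩ interior Ω).Nonempty := by
    obtain ⟨z, hzK, hzΩ⟩ := hKΩ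
    rw [← hKcl] at hzK
    obtain ⟨w, hwΩ, hwK⟩ := mem_closure_iff.mp hzK _ isOpen_interior hzΩ
    exact ⟨w, hwK, hwΩ⟩
  have hsubΩ : interior K ⊆ interior Ω :=
    hK.subset_of_closure_inter_subset isOpen_interior hmeet fun v ⟨hvcl, hvK⟩ =>
      hFΩ (hF.closure_subset_iff.mpr hsubF (isOpen_interior.inter_closure ⟨hvK, hvcl⟩))
  rw [← hKcl]
  exact hF.closure_subset_iff.mpr fun v hv => hsubF ⟨hv, hsubΩ hv⟩

lemma cellUL_one_subset_interior {S : ℕ → Finset (ℤ × ℤ)}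
    (hnest : ∀ ℓ, cellUL (ℓ + 1) (S (ℓ + 1)) ⊆ cellUL ℓ (S ℓ))
    (hbdry : frontier (cellUL 0 (S 0)) ∩ frontier (cellUL 1 (S 1)) = ∅) :
    cellUL 1 (S 1) ⊆ interior (cellUL 0 (S 0)) := by
  intro z hz
  by_contra hz₀
  have hz₁ : z ∉ interior (cellUL 1 (S 1)) := fun h => hz₀ (interior_mono (hnest 0) h)
  rw [(isClosed_cellUL 0 (S 0)).frontier_eq, (isClosed_cellUL 1 (S 1)).frontier_eq] at hbdry
  exact hbdry.subset ⟨⟨hnest 0 hz, hz₀⟩, hz, hz₁⟩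

/-- `RS ℓ` indexes the level-`ℓ` cells of `R^ℓ`, the part of `Ω⁰` outside `int Ω^{ℓ+1}`. -/
def IsRemainder (S RS : ℕ → Finset (ℤ × ℤ)) : Prop :=
  ∀ ℓ (p : ℤ × ℤ), p ∈ RS ℓ ↔
    (cellL ℓ p ⊆ cellUL 0 (S 0) ∧ interior (cellL ℓ p) ∩ cellUL (ℓ + 1) (S (ℓ + 1)) = ∅)

namespace IsRemainder

variable {S RS : ℕ → Finset (ℤ × ℤ)}

lemma cellUL_subset (hRS : IsRemainder S RS) (ℓ : ℕ) : cellUL ℓ (RS ℓ) ⊆ cellUL 0 (S 0) := by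
  intro z hz
  obtain ⟨p, hp, hzp⟩ := mem_cellUL.mp hz
  exact ((hRS ℓ p).mp hp).1 hzp

lemma cellUL_mono (hRS : IsRemainder S RS)
    (hnest : ∀ ℓ, cellUL (ℓ + 1) (S (ℓ + 1)) ⊆ cellUL ℓ (S ℓ)) (ℓ : ℕ) :
    cellUL ℓ (RS ℓ) ⊆ cellUL (ℓ + 1) (RS (ℓ + 1)) := by
  intro z hz
  obtain ⟨p, hp, hzp⟩ := mem_cellUL.mp hz
  obtain ⟨p', hzp', hsub⟩ := exists_cellL_subset ℓ 1 hzp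
  rw [hRS] at hp
  refine cellL_subset_cellUL ((hRS _ p').mpr ⟨hsub.trans hp.1, ?_⟩) hzp'
  exact subset_empty_iff.mp (hp.2 ▸ inter_subset_inter (interior_mono hsub) (hnest (ℓ + 1)))

lemma cellUL_eq (hRS : IsRemainder S RS) {L : ℕ} (hL : S (L + 1) = ∅) :
    cellUL L (RS L) = cellUL 0 (S 0) := by
  refine (hRS.cellUL_subset L).antisymm fun z hz => ?_
  obtain ⟨p, hp, hzp⟩ := mem_cellUL.mp hz
  obtain ⟨p', hzp', hsub⟩ := exists_cellL_subset 0 L hzp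
  rw [zero_add] at hzp' hsub
  refine cellL_subset_cellUL ((hRS L p').mpr ⟨hsub.trans (cellL_subset_cellUL hp), ?_⟩) hzp'
  simp [hL, cellUL]

lemma interior_cellUL_inter_eq_empty (hRS : IsRemainder S RS) {ℓ : ℕ} {T : Finset (ℤ × ℤ)}
    (hT : cellUL ℓ T = cellUL (ℓ + 1) (S (ℓ + 1))) :
    interior (cellUL ℓ (RS ℓ)) ∩ cellUL ℓ T = ∅ := by
  refine eq_empty_of_forall_notMem fun z ⟨hzR, hzT⟩ => ?_
  obtain ⟨c, hcT, hzc⟩ := mem_cellUL.mp hzT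
  rw [← closure_interior_cellL] at hzc
  obtain ⟨w, hwR, hwc⟩ := mem_closure_iff.mp hzc _ isOpen_interior hzR
  have hcR : c ∈ RS ℓ := mem_of_mem_interior_cellL hwc (interior_subset hwR)
  have hwT : w ∈ cellUL (ℓ + 1) (S (ℓ + 1)) := hT ▸ cellL_subset_cellUL hcT (interior_subset hwc)
  exact ((hRS ℓ c).mp hcR).2.subset ⟨hwc, hwT⟩

lemma subset_union (hRS : IsRemainder S RS) {ℓ : ℕ} {T : Finset (ℤ × ℤ)}
    (hT : cellUL ℓ T = cellUL (ℓ + 1) (S (ℓ + 1))) :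
    cellUL 0 (S 0) ⊆ cellUL ℓ (RS ℓ) ∪ cellUL ℓ T := by
  intro z hz
  obtain ⟨p, hp, hzp⟩ := mem_cellUL.mp hz
  obtain ⟨c, hzc, hsub⟩ := exists_cellL_subset 0 ℓ hzp
  rw [zero_add] at hzc hsub
  by_cases hc : interior (cellL ℓ c) ∩ cellUL (ℓ + 1) (S (ℓ + 1)) = ∅
  · exact Or.inl (cellL_subset_cellUL ((hRS ℓ c).mpr ⟨hsub.trans (cellL_subset_cellUL hp), hc⟩) hzc)
  · obtain ⟨w, hwc, hwT⟩ := nonempty_iff_ne_empty.mpr hc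
    exact Or.inr (cellL_subset_cellUL (mem_of_mem_interior_cellL hwc (hT ▸ hwT)) hzc)

lemma suppL_succ_subset_cellUL {m n : ℕ} (hRS : IsRemainder S RS)
    (hnest : ∀ ℓ, cellUL (ℓ + 1) (S (ℓ + 1)) ⊆ cellUL ℓ (S ℓ))
    (hbdry : frontier (cellUL 0 (S 0)) ∩ frontier (cellUL 1 (S 1)) = ∅) {ℓ : ℕ}
    {T : Finset (ℤ × ℤ)} (hT : cellUL ℓ T = cellUL (ℓ + 1) (S (ℓ + 1))) {q : ℤ × ℤ}
    (h₁ : suppL m n (ℓ + 1) q ∩ interior (cellUL ℓ (RS ℓ)) = ∅)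
    (h₂ : (suppL m n (ℓ + 1) q ∩ interior (cellUL 0 (S 0))).Nonempty) :
    suppL m n (ℓ + 1) q ⊆ cellUL ℓ T := by
  have hTΩ : cellUL ℓ T ⊆ interior (cellUL 0 (S 0)) := hT ▸
    (antitone_nat_of_succ_le (f := fun ℓ => cellUL ℓ (S ℓ)) hnest (Nat.le_add_left 1 ℓ)).trans
      (cellUL_one_subset_interior hnest hbdry)
  exact subset_of_isPreconnected_interior (isPreconnected_interior_suppL m n (ℓ + 1) q)
    (closure_interior_suppL m n (ℓ + 1) q) (isClosed_cellUL ℓ T) hTΩ (hRS.subset_union hT) h₁ h₂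

end IsRemainder

/-! ### Admissibility and free blocks -/

lemma _root_.Set.OrdConnected.forall_of_step {I : Set ℤ} (hI : I.OrdConnected) {P : ℤ → Prop}
    {t₀ : ℤ} (ht₀ : t₀ ∈ I) (h₀ : P t₀) (hup : ∀ s ∈ I, s + 1 ∈ I → P s → P (s + 1))
    (hdown : ∀ s ∈ I, s - 1 ∈ I → P s → P (s - 1)) : ∀ t ∈ I, P t := by
  intro t ht
  rcases le_total t₀ t with h | h
  · induction t, h using Int.leInduction with
    | base => exact h₀
    | succ s hs ih =>
      have hsI : s ∈ I := hI.out ht₀ ht ⟨hs, by omega⟩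
      exact hup s hsI ht (ih hsI)
  · induction t, h using Int.leInductionDown with
    | base => exact h₀
    | pred s hs ih =>
      have hsI : s ∈ I := hI.out ht ht₀ ⟨by omega, hs⟩
      exact hdown s hsI ht (ih hsI)

lemma _root_.Adm1.lt_sub_of_notMem {d : ℤ} {A : Set ℤ} (hA : Adm1 d A) {a b c : ℤ} (ha : a ∈ A)
    (hb : b ∈ A) (hac : a < c) (hcb : c < b) (hc : c ∉ A) : d < b - a - 1 := by
  classical
  obtain ⟨y, ⟨hay, hyc, hyA⟩, hymax⟩ := Int.exists_greatest_of_bdd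
    (P := fun x => a ≤ x ∧ x < c ∧ x ∈ A) ⟨c, fun x hx => hx.2.1.le⟩ ⟨a, le_rfl, hac, ha⟩
  obtain ⟨z, ⟨hcz, hzb, hzA⟩, hzmin⟩ := Int.exists_least_of_bdd
    (P := fun x => c < x ∧ x ≤ b ∧ x ∈ A) ⟨c, fun x hx => hx.1.le⟩ ⟨b, hcb, le_rfl, hb⟩
  have hgap : ∀ x, y < x → x < z → x ∉ A := by
    intro x hyx hxz hxA
    rcases lt_trichotomy x c with hxc | rfl | hcx
    · exact absurd (hymax x ⟨by omega, hxc, hxA⟩) (by omega)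
    · exact hc hxA
    · exact absurd (hzmin x ⟨hcx, by omega, hxA⟩) (by omega)
  rcases hA y z hyA hzA (by omega) hgap with h | h <;> omega

def dilate (k : ℕ) (A : Set ℤ) : Set ℤ := {x | ∃ e : ℕ, e ≤ k ∧ x - e ∈ A}

lemma dilate_union (k : ℕ) (A B : Set ℤ) : dilate k (A ∪ B) = dilate k A ∪ dilate k B := by
  ext x
  simp only [dilate, mem_union, Set.mem_ofPred_eq]
  constructor
  · rintro ⟨e, he, hA | hB⟩
    exacts [Or.inl ⟨e, he, hA⟩, Or.inr ⟨e, he, hB⟩]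
  · rintro (⟨e, he, h⟩ | ⟨e, he, h⟩)
    exacts [⟨e, he, Or.inl h⟩, ⟨e, he, Or.inr h⟩]

lemma adm1_of_adm1_dilate {d : ℕ} {A : Set ℤ} (h : ∀ k < d, Adm1 1 (dilate k A)) :
    Adm1 d A := by
  intro a b ha hb hab hgap
  by_contra hcon
  push Not at hcon
  -- a gap of length `g ∈ [1, d]` in `A` is a gap of length `1` in `dilate (g - 1) A`
  obtain ⟨k, hk⟩ : ∃ k : ℕ, (k : ℤ) = b - a - 2 := ⟨(b - a - 2).toNat, by omega⟩
  have hmem : ∀ x ∈ A, x + k ∈ dilate k A := fun x hx => ⟨k, le_rfl, by simpa using hx⟩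
  have hfree : ∀ c, a + k < c → c < b → c ∉ dilate k A := by
    rintro c hc₁ hc₂ ⟨e, he, hce⟩
    exact hgap (c - e) (by omega) (by omega) hce
  have := h k (by omega) (a + k) b (hmem a ha) ⟨0, Nat.zero_le k, by simpa using hb⟩ (by omega)
    hfree
  omega

lemma _root_.Adm1.exists_window {d : ℕ} {A : Set ℤ} (hA : Adm1 d A) {lo hi : ℤ} (hlo : lo ≤ hi)
    (hhi : hi ≤ lo + d) (hfree : ∀ s, lo ≤ s → s ≤ hi → s ∉ A) :
    ∃ t, hi - d ≤ t ∧ t ≤ lo ∧ ∀ s, t ≤ s → s ≤ t + d → s ∉ A := by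
  classical
  -- the window starts right after the last element of `A` below `lo` that it could contain
  by_cases hx : ∃ x, hi - d - 1 ≤ x ∧ x < lo ∧ x ∈ A
  · obtain ⟨x, ⟨hx₁, hx₂, hxA⟩, hxmax⟩ := Int.exists_greatest_of_bdd
      (P := fun x => hi - d - 1 ≤ x ∧ x < lo ∧ x ∈ A) ⟨lo, fun x hx => hx.2.1.le⟩ hx
    refine ⟨x + 1, by omega, by omega, fun s hs₁ hs₂ hsA => ?_⟩
    rcases lt_or_ge s lo with h | h
    · exact absurd (hxmax s ⟨by omega, h, hsA⟩) (by omega)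
    rcases le_or_gt s hi with h' | h'
    · exact hfree s h h' hsA
    · have := hA.lt_sub_of_notMem hxA hsA hx₂ (by omega) (hfree lo le_rfl hlo)
      omega
  · push Not at hx
    refine ⟨hi - d, le_rfl, by omega, fun s hs₁ hs₂ hsA => ?_⟩
    rcases lt_or_ge s lo with h | h
    · exact hx s (by omega) h hsA
    · exact hfree s h (by omega) hsA

lemma mem_hdil_iterate {k : ℕ} {S : Finset (ℤ × ℤ)} {p : ℤ × ℤ} :
    p ∈ hdil^[k] S ↔ ∃ e : ℕ, e ≤ k ∧ (p.1 - e, p.2) ∈ S := by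
  induction k generalizing p with
  | zero => simp
  | succ k ih =>
    rw [Function.iterate_succ_apply', hdil, Finset.mem_union, Finset.mem_image, ih]
    constructor
    · rintro (⟨e, he, h⟩ | ⟨a, ha, rfl⟩)
      · exact ⟨e, by omega, h⟩
      · obtain ⟨e, he, h⟩ := ih.mp ha
        exact ⟨e + 1, by omega, by convert h using 2; push_cast; ring⟩
    · rintro ⟨e, he, h⟩
      rcases Nat.lt_or_ge e (k + 1) with h' | h'
      · exact Or.inl ⟨e, by omega, h⟩
      · refine Or.inr ⟨(p.1 - 1, p.2), ih.mpr ⟨k, le_rfl, ?_⟩, by simp⟩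
        convert h using 2; push_cast; omega

lemma mem_vdil_iterate {k : ℕ} {S : Finset (ℤ × ℤ)} {p : ℤ × ℤ} :
    p ∈ vdil^[k] S ↔ ∃ e : ℕ, e ≤ k ∧ (p.1, p.2 - e) ∈ S := by
  induction k generalizing p with
  | zero => simp
  | succ k ih =>
    rw [Function.iterate_succ_apply', vdil, Finset.mem_union, Finset.mem_image, ih]
    constructor
    · rintro (⟨e, he, h⟩ | ⟨a, ha, rfl⟩)
      · exact ⟨e, by omega, h⟩
      · obtain ⟨e, he, h⟩ := ih.mp ha
        exact ⟨e + 1, by omega, by convert h using 2; push_cast; ring⟩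
    · rintro ⟨e, he, h⟩
      rcases Nat.lt_or_ge e (k + 1) with h' | h'
      · exact Or.inl ⟨e, by omega, h⟩
      · refine Or.inr ⟨(p.1, p.2 - 1), ih.mpr ⟨k, le_rfl, ?_⟩, by simp⟩
        convert h using 2; push_cast; omega

lemma mem_dil {S : Finset (ℤ × ℤ)} {k₁ k₂ : ℕ} {p : ℤ × ℤ} :
    p ∈ dil S k₁ k₂ ↔ ∃ e₁ : ℕ, e₁ ≤ k₁ ∧ ∃ e₂ : ℕ, e₂ ≤ k₂ ∧ (p.1 - e₁, p.2 - e₂) ∈ S := by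
  simp only [dil, mem_hdil_iterate, mem_vdil_iterate]

def blocked (C : Finset (ℤ × ℤ)) (n : ℕ) (t : ℤ) : Set ℤ :=
  {x | ∃ d : ℕ, d ≤ n ∧ (x, t + d) ∈ C}

lemma notMem_blocked_iff {C : Finset (ℤ × ℤ)} {n : ℕ} {x t : ℤ} :
    x ∉ blocked C n t ↔ ∀ j, t ≤ j → j ≤ t + n → (x, j) ∉ C := by
  simp only [blocked, Set.mem_ofPred_eq, not_exists, not_and]
  constructor
  · intro h j hj₁ hj₂ hj
    exact h (j - t).toNat (by omega) (by rwa [show t + ((j - t).toNat : ℤ) = j by omega])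
  · exact fun h d hd => h _ (by omega) (by omega)

lemma row_dil (C : Finset (ℤ × ℤ)) (k n : ℕ) (t : ℤ) :
    row (dil C k n) (t + n) = dilate k (blocked C n t) := by
  ext x
  simp only [row, dilate, blocked, Set.mem_ofPred_eq, mem_dil]
  constructor
  · rintro ⟨e₁, he₁, e₂, he₂, h⟩
    exact ⟨e₁, he₁, n - e₂, by omega, by convert h using 2; push_cast [he₂]; ring⟩
  · rintro ⟨e₁, he₁, d, hd, h⟩
    exact ⟨e₁, he₁, n - d, by omega, by convert h using 2; push_cast [hd]; ring⟩

lemma col_dil (C : Finset (ℤ × ℤ)) (k : ℕ) (i : ℤ) :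
    col (dil C 0 k) i = dilate k (col C i) := by
  ext j
  simp only [col, dilate, Set.mem_ofPred_eq, mem_dil]
  constructor
  · rintro ⟨e₁, he₁, e₂, he₂, h⟩
    exact ⟨e₂, he₂, by simpa [show e₁ = 0 by omega] using h⟩
  · rintro ⟨e, he, h⟩
    exact ⟨0, le_rfl, e, he, by simpa using h⟩

lemma _root_.A2.rowAdmissible_dil {m n : ℕ} {C : Finset (ℤ × ℤ)} (h : A2 m n C) :
    ∀ k < m, rowAdmissible (dil C k n) := by
  induction m with
  | zero => intro k hk; omega
  | succ m ih =>
    intro k hk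
    simp only [A2] at h
    rcases Nat.lt_succ_iff_lt_or_eq.mp hk with hk | rfl
    exacts [ih h.1 k hk, h.2.2]

lemma _root_.A2.to_A2_zero {m n : ℕ} {C : Finset (ℤ × ℤ)} (h : A2 m n C) : A2 0 n C := by
  induction m with
  | zero => exact h
  | succ m ih => simp only [A2] at h; exact ih h.1

lemma _root_.A2.colAdmissible_dil {m n : ℕ} {C : Finset (ℤ × ℤ)} (h : A2 m n C) :
    ∀ k < n, colAdmissible (dil C 0 k) := by
  have h₀ := h.to_A2_zero
  clear h
  induction n with
  | zero => intro k hk; omega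
  | succ n ih =>
    intro k hk
    simp only [A2] at h₀
    rcases Nat.lt_succ_iff_lt_or_eq.mp hk with hk | rfl
    exacts [ih h₀.1 k hk, h₀.2.2]

lemma _root_.A2.adm1_blocked {m n : ℕ} {C : Finset (ℤ × ℤ)} (h : A2 m n C) (t : ℤ) :
    Adm1 m (blocked C n t) :=
  adm1_of_adm1_dilate fun k hk => row_dil C k n t ▸ (h.rowAdmissible_dil k hk (t + n)).1

lemma _root_.A2.adm1_blocked_union {m n : ℕ} {C : Finset (ℤ × ℤ)} (h : A2 m n C) (t : ℤ) :
    Adm1 m (blocked C n t ∪ blocked C n (t + 1)) := by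
  refine adm1_of_adm1_dilate fun k hk => ?_
  have := (h.rowAdmissible_dil k hk (t + n)).2
  rwa [row_dil, show t + n + 1 = t + 1 + n by ring, row_dil, ← dilate_union] at this

lemma _root_.A2.adm1_col {m n : ℕ} {C : Finset (ℤ × ℤ)} (h : A2 m n C) (i : ℤ) : Adm1 n (col C i) :=
  adm1_of_adm1_dilate fun k hk => col_dil C k i ▸ (h.colAdmissible_dil k hk i).1

lemma _root_.A2.adm1_col_union {m n : ℕ} {C : Finset (ℤ × ℤ)} (h : A2 m n C) (i : ℤ) :
    Adm1 n (col C i ∪ col C (i + 1)) := by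
  refine adm1_of_adm1_dilate fun k hk => ?_
  have := (h.colAdmissible_dil k hk i).2
  rwa [col_dil, col_dil, ← dilate_union] at this

lemma _root_.Adm1.forall_notMem_of_forall_notMem {m : ℕ} {U V : Set ℤ} (hadm : Adm1 m (U ∪ V))
    {i₀ i₁ c : ℤ} (hspan : i₁ ≤ i₀ + m) (hU : ∀ x, i₀ ≤ x → x ≤ c → x ∉ U) (hc : c ∉ V)
    (hw : ∃ w, i₀ ≤ w ∧ w ≤ i₁ ∧ w ∈ U) : ∀ x, i₀ ≤ x → x ≤ c → x ∉ V := by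
  intro x hx₁ hx₂ hxV
  obtain ⟨w, hw₁, hw₂, hwU⟩ := hw
  have hxc : x < c := lt_of_le_of_ne hx₂ fun h => hc (h ▸ hxV)
  have hcw : c < w := not_le.mp fun h => hU w hw₁ h hwU
  have := hadm.lt_sub_of_notMem (Or.inr hxV) (Or.inl hwU) hxc hcw
    (fun h => h.elim (hU c (by omega) le_rfl) hc)
  omega

lemma exists_common_free_window {m : ℕ} {B : ℤ → Set ℤ} {G : Set ℤ} {i₀ i₁ : ℤ}
    (hi : i₀ ≤ i₁) (hspan : i₁ ≤ i₀ + m) (hadm : ∀ t, Adm1 m (B t ∪ B (t + 1)))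
    (hconn : ∀ i, (G ∩ {t | i ∉ B t}).OrdConnected) (hlast : ∃ t ∈ G, i₁ ∉ B t)
    (hpair : ∀ i, i₀ ≤ i → i + 1 ≤ i₁ → ∃ t ∈ G, i ∉ B t ∧ i + 1 ∉ B t) :
    ∃ t ∈ G, ∀ x, i₀ ≤ x → x ≤ i₁ → x ∉ B t := by
  by_contra hcon
  push Not at hcon
  -- Each window of `G` freeing column `i` then frees `[i₀, i]`: walk, through windows freeing
  -- `i`, from one shared with `i - 1`; a column of `[i₀, i]` blocked on the way would leave a
  -- gap shorter than `m` in some `B s ∪ B (s ± 1)`.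
  have claim : ∀ i, i₀ ≤ i → i ≤ i₁ → ∀ t ∈ G, i ∉ B t → ∀ x, i₀ ≤ x → x ≤ i → x ∉ B t := by
    intro i hi
    induction i, hi using Int.leInduction with
    | base => intro _ t _ ht x hx₁ hx₂; rwa [le_antisymm hx₂ hx₁]
    | succ i hi ih =>
      intro hi₁ t htG ht
      obtain ⟨t₀, ht₀G, hit₀, hi₁t₀⟩ := hpair i hi hi₁
      have step : ∀ s s', s ∈ G → Adm1 m (B s ∪ B s') → i + 1 ∉ B s' →
          (∀ x, i₀ ≤ x → x ≤ i + 1 → x ∉ B s) → ∀ x, i₀ ≤ x → x ≤ i + 1 → x ∉ B s' :=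
        fun s s' hs hadm' hs' hP => hadm'.forall_notMem_of_forall_notMem hspan hP hs' (hcon s hs)
      refine (hconn (i + 1)).forall_of_step (P := fun s => ∀ x, i₀ ≤ x → x ≤ i + 1 → x ∉ B s)
        ⟨ht₀G, hi₁t₀⟩ ?_ ?_ ?_ t ⟨htG, ht⟩
      · intro x hx₁ hx₂
        rcases lt_or_eq_of_le hx₂ with h | rfl
        exacts [ih (by omega) t₀ ht₀G hit₀ x hx₁ (by omega), hi₁t₀]
      · exact fun s hs hs' hP => step s (s + 1) hs.1 (hadm s) hs'.2 hP
      · refine fun s hs hs' hP => step s (s - 1) hs.1 ?_ hs'.2 hP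
        simpa [Set.union_comm] using hadm (s - 1)
  obtain ⟨t, htG, ht⟩ := hlast
  obtain ⟨x, hx₁, hx₂, hx⟩ := hcon t htG
  exact claim i₁ hi le_rfl t htG ht x hx₁ hx₂ hx

lemma _root_.A2.exists_free_block {m n : ℕ} {C : Finset (ℤ × ℤ)} (hC : A2 m n C)
    {i₀ i₁ j₀ j₁ : ℤ} (hi : i₀ ≤ i₁) (hi' : i₁ ≤ i₀ + m) (hj : j₀ ≤ j₁) (hj' : j₁ ≤ j₀ + n)
    (hfree : ∀ i j, i₀ ≤ i → i ≤ i₁ → j₀ ≤ j → j ≤ j₁ → (i, j) ∉ C) :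
    ∃ a b : ℤ, a ≤ i₀ ∧ i₁ ≤ a + m ∧ b ≤ j₀ ∧ j₁ ≤ b + n ∧
      ∀ i j, a ≤ i → i ≤ a + m → b ≤ j → j ≤ b + n → (i, j) ∉ C := by
  -- `t ∈ Icc (j₁ - n) j₀` indexes the windows of rows `[t, t + n]` containing `[j₀, j₁]`
  have hconn : ∀ i, (Set.Icc (j₁ - n) j₀ ∩ {t | i ∉ blocked C n t}).OrdConnected := by
    refine fun i => ⟨fun t ht t' ht' s hs => ⟨⟨by linarith [ht.1.1, hs.1], by
      linarith [ht'.1.2, hs.2]⟩, notMem_blocked_iff.mpr fun j hj₁ hj₂ => ?_⟩⟩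
    rcases le_or_gt j (t + n) with h | h
    · exact notMem_blocked_iff.mp ht.2 j (by linarith [hs.1]) h
    · exact notMem_blocked_iff.mp ht'.2 j (by linarith [ht'.1.2, ht.1.1]) (by linarith [hs.2])
  have hwindow : ∀ (A : Set ℤ), Adm1 n A → (∀ s, j₀ ≤ s → s ≤ j₁ → s ∉ A) →
      ∃ t ∈ Set.Icc (j₁ - n) j₀, ∀ s, t ≤ s → s ≤ t + n → s ∉ A := fun A hA hA' => by
    obtain ⟨t, ht₁, ht₂, ht⟩ := hA.exists_window hj hj' hA'
    exact ⟨t, ⟨ht₁, ht₂⟩, ht⟩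
  obtain ⟨t, htG, ht⟩ := exists_common_free_window (B := blocked C n) hi hi' hC.adm1_blocked_union
    hconn (by
      obtain ⟨t, htG, ht⟩ := hwindow _ (hC.adm1_col i₁) fun s h₁ h₂ => hfree i₁ s hi le_rfl h₁ h₂
      exact ⟨t, htG, notMem_blocked_iff.mpr ht⟩)
    (fun i h₁ h₂ => by
      obtain ⟨t, htG, ht⟩ := hwindow _ (hC.adm1_col_union i) fun s hs₁ hs₂ hs =>
        hs.elim (hfree i s h₁ (by omega) hs₁ hs₂) (hfree (i + 1) s (by omega) h₂ hs₁ hs₂)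
      exact ⟨t, htG, notMem_blocked_iff.mpr fun j hj₁ hj₂ hj => ht j hj₁ hj₂ (Or.inl hj),
        notMem_blocked_iff.mpr fun j hj₁ hj₂ hj => ht j hj₁ hj₂ (Or.inr hj)⟩)
  obtain ⟨a, ha₁, ha₂, ha⟩ := (hC.adm1_blocked t).exists_window hi hi' ht
  exact ⟨a, t, by omega, by omega, htG.2, by linarith [htG.1],
    fun i j hi₁ hi₂ hj₁ hj₂ => notMem_blocked_iff.mp (ha i hi₁ hi₂) j hj₁ hj₂⟩

lemma mem_of_suppL_succ_subset_cellUL {m n ℓ : ℕ} {r : ℤ × ℤ} {T : Finset (ℤ × ℤ)}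
    (h : suppL m n (ℓ + 1) r ⊆ cellUL ℓ T) {i j : ℤ} (hi₁ : r.1 / 2 ≤ i)
    (hi₂ : i ≤ (r.1 + m) / 2) (hj₁ : r.2 / 2 ≤ j) (hj₂ : j ≤ (r.2 + n) / 2) : (i, j) ∈ T := by
  obtain ⟨w, hwi, hws⟩ := interior_cellL_inter_suppL_succ_nonempty (m := m) (n := n) (ℓ := ℓ)
    (r := r) (i := i) (j := j) (by omega) (by omega) (by omega) (by omega)
  exact mem_of_mem_interior_cellL hwi (h hws)

lemma _root_.Atilde.exists_block_subset_of_rect_subset {m n : ℕ} {T : Finset (ℤ × ℤ)}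
    (hT : Atilde m n T) {i₀ i₁ j₀ j₁ : ℤ} (hi : i₀ ≤ i₁) (hi' : i₁ ≤ i₀ + m) (hj : j₀ ≤ j₁)
    (hj' : j₁ ≤ j₀ + n) (hsub : ∀ i j, i₀ ≤ i → i ≤ i₁ → j₀ ≤ j → j ≤ j₁ → (i, j) ∈ T) :
    ∃ a b : ℤ, a ≤ i₀ ∧ i₁ ≤ a + m ∧ b ≤ j₀ ∧ j₁ ≤ b + n ∧
      ∀ i j, a ≤ i → i ≤ a + m → b ≤ j → j ≤ b + n → (i, j) ∈ T := by
  obtain ⟨a₁, b₁, a₂, b₂, hTbox, hA2⟩ := hT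
  have hin : ∀ i j, (i, j) ∈ T → a₁ + 1 ≤ i ∧ i ≤ b₁ - 1 ∧ a₂ + 1 ≤ j ∧ j ≤ b₂ - 1 :=
    fun i j h => by simpa [and_assoc] using hTbox h
  obtain ⟨a, b, ha₁, ha₂, hb₁, hb₂, hfree⟩ := hA2.exists_free_block hi hi' hj hj'
    fun i j h₁ h₂ h₃ h₄ h => (Finset.mem_sdiff.mp h).2 (hsub i j h₁ h₂ h₃ h₄)
  have hbox : ∀ i j, a ≤ i → i ≤ a + m → b ≤ j → j ≤ b + n → a₁ ≤ i → i ≤ b₁ → a₂ ≤ j →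
      j ≤ b₂ → (i, j) ∈ T := fun i j h₁ h₂ h₃ h₄ h₅ h₆ h₇ h₈ => by
    by_contra h
    exact hfree i j h₁ h₂ h₃ h₄ (Finset.mem_sdiff.mpr ⟨by simp [*], h⟩)
  -- The free block contains the cell `(i₀, j₀)` of `T`. If it left the box, its cell on the box
  -- boundary in row `j₀` or column `i₀` would be free, hence in `T`, which lies strictly inside.
  have h₀ := hin i₀ j₀ (hsub i₀ j₀ le_rfl hi le_rfl hj)
  refine ⟨a, b, ha₁, ha₂, hb₁, hb₂, fun i j h₁ h₂ h₃ h₄ => ?_⟩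
  have hi₁ := hin _ _ (hbox (max a₁ (min i b₁)) j₀ (by omega) (by omega) (by omega) (by omega)
    (by omega) (by omega) (by omega) (by omega))
  have hj₁ := hin _ _ (hbox i₀ (max a₂ (min j b₂)) (by omega) (by omega) (by omega) (by omega)
    (by omega) (by omega) (by omega) (by omega))
  exact hbox i j h₁ h₂ h₃ h₄ (by omega) (by omega) (by omega) (by omega)

lemma IsRemainder.exists_parent {m n : ℕ} {S RS : ℕ → Finset (ℤ × ℤ)} (hRS : IsRemainder S RS)
    (hnest : ∀ ℓ, cellUL (ℓ + 1) (S (ℓ + 1)) ⊆ cellUL ℓ (S ℓ))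
    (hbdry : frontier (cellUL 0 (S 0)) ∩ frontier (cellUL 1 (S 1)) = ∅) {ℓ : ℕ}
    {T : Finset (ℤ × ℤ)} (hT : cellUL ℓ T = cellUL (ℓ + 1) (S (ℓ + 1))) (hAt : Atilde m n T)
    {r : ℤ × ℤ} (h₁ : suppL m n (ℓ + 1) r ∩ interior (cellUL ℓ (RS ℓ)) = ∅)
    (h₂ : (suppL m n (ℓ + 1) r ∩ interior (cellUL 0 (S 0))).Nonempty) :
    ∃ q, r ∈ children m n q ∧ suppL m n ℓ q ∩ interior (cellUL ℓ (RS ℓ)) = ∅ ∧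
      (suppL m n ℓ q ∩ interior (cellUL 0 (S 0))).Nonempty := by
  have hsupp := hRS.suppL_succ_subset_cellUL hnest hbdry hT h₁ h₂
  obtain ⟨a, b, ha₁, ha₂, hb₁, hb₂, hblock⟩ := hAt.exists_block_subset_of_rect_subset
    (i₀ := r.1 / 2) (i₁ := (r.1 + m) / 2) (j₀ := r.2 / 2) (j₁ := (r.2 + n) / 2) (by omega)
    (by omega) (by omega) (by omega) fun i j => mem_of_suppL_succ_subset_cellUL hsupp
  have hr : r ∈ children m n (a, b) := mem_children.mpr ⟨⟨by omega, by omega⟩, by omega, by omega⟩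
  refine ⟨(a, b), hr, subset_empty_iff.mp fun z hz => ?_, h₂.mono
    (inter_subset_inter_left _ (suppL_succ_subset_of_mem_children hr))⟩
  rw [← hRS.interior_cellUL_inter_eq_empty hT]
  exact ⟨hz.2, suppL_subset_cellUL hblock hz.1⟩

/-! ### The weights -/

lemma sum_mul_eq_sum_of_refine {ι κ : Type*} {D : Finset ι} {A : Finset κ} {ch : ι → Finset κ}
    {w b : ι → ℝ} {c : ι → κ → ℝ} {b' : κ → ℝ} (hb : ∀ q ∈ D, b q = ∑ r ∈ ch q, c q r * b' r)
    (hc : ∀ q ∈ D, ∀ r ∉ ch q, c q r = 0) (hA : ∀ q ∈ D, ∀ r ∈ ch q, b' r ≠ 0 → r ∈ A) :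
    ∑ q ∈ D, w q * b q = ∑ r ∈ A, (∑ q ∈ D, w q * c q r) * b' r := by
  calc ∑ q ∈ D, w q * b q = ∑ q ∈ D, ∑ r ∈ A, w q * (c q r * b' r) := by
        refine Finset.sum_congr rfl fun q hq => ?_
        rw [hb q hq, Finset.mul_sum]
        refine Finset.sum_congr_of_eq_on_inter (fun r hr hrA => ?_) (fun r _ hr => ?_)
          fun _ _ _ => rfl
        · rw [not_imp_comm.mp (hA q hq r hr) hrA, mul_zero, mul_zero]
        · rw [hc q hq r hr, zero_mul, mul_zero]
    _ = ∑ r ∈ A, (∑ q ∈ D, w q * c q r) * b' r := by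
        rw [Finset.sum_comm]
        simp only [Finset.sum_mul, mul_assoc]

lemma finsum_mem_setOf_fst_lt {α : Type*} {s : ℕ → Set α} (hs : ∀ ℓ, (s ℓ).Finite)
    (f : ℕ × α → ℝ) (N : ℕ) :
    ∑ᶠ x ∈ {x : ℕ × α | x.1 < N ∧ x.2 ∈ s x.1}, f x = ∑ ℓ ∈ range N, ∑ᶠ a ∈ s ℓ, f (ℓ, a) := by
  have hset : {x : ℕ × α | x.1 < N ∧ x.2 ∈ s x.1} =
      ⋃ ℓ ∈ (Finset.range N : Set ℕ), Prod.mk ℓ '' s ℓ := by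
    ext ⟨ℓ, a⟩
    simp [and_comm]
  have hdisj : (Finset.range N : Set ℕ).PairwiseDisjoint fun ℓ => Prod.mk ℓ '' s ℓ :=
    fun i _ j _ hij => Set.disjoint_left.mpr fun _ ⟨_, _, hi⟩ ⟨_, _, hj⟩ =>
      hij (congrArg Prod.fst (hi.trans hj.symm))
  rw [hset, finsum_mem_biUnion hdisj (Finset.range N).finite_toSet fun ℓ _ => (hs ℓ).image _,
    finsum_mem_coe_finset]
  exact Finset.sum_congr rfl fun ℓ _ => finsum_mem_image (Prod.mk_right_injective ℓ).injOn

variable (m n : ℕ) (Ω : Set (ℝ × ℝ)) (RS : ℕ → Finset (ℤ × ℤ))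

/-- The B-splines of level `ℓ` that the construction replaces by their children of level
`ℓ + 1`. -/
def refined (ℓ : ℕ) : Set (ℤ × ℤ) :=
  {q | suppL m n ℓ q ∩ interior (cellUL ℓ (RS ℓ)) = ∅ ∧ (suppL m n ℓ q ∩ interior Ω).Nonempty}

def active (ℓ : ℕ) : Set (ℤ × ℤ) := Kset m n RS ℓ ∪ refined m n Ω RS ℓ

def weight : ℕ → ℤ × ℤ → ℝ
  | 0 => fun _ => 1
  | ℓ + 1 => fun r => ∑ᶠ q ∈ refined m n Ω RS ℓ, weight ℓ q * twoScaleCoeff m n q r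

variable {m n Ω RS}

lemma finite_refined (hΩ : Bornology.IsBounded Ω) (ℓ : ℕ) : (refined m n Ω RS ℓ).Finite :=
  (finite_setOf_suppL_inter_nonempty m n ℓ (hΩ.subset interior_subset)).subset fun _ hq => hq.2

lemma finite_Kset (ℓ : ℕ) : (Kset m n RS ℓ).Finite := by
  refine (finite_setOf_suppL_inter_nonempty m n ℓ
    ((isCompact_cellUL ℓ (RS ℓ)).isBounded.subset interior_subset)).subset fun q hq => ?_
  cases ℓ with
  | zero => exact hq
  | succ ℓ => exact hq.2

lemma finite_active (hΩ : Bornology.IsBounded Ω) (ℓ : ℕ) : (active m n Ω RS ℓ).Finite :=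
  (finite_Kset ℓ).union (finite_refined hΩ ℓ)

lemma disjoint_Kset_refined (ℓ : ℕ) : Disjoint (Kset m n RS ℓ) (refined m n Ω RS ℓ) := by
  refine Set.disjoint_left.mpr fun q hK hD => ?_
  have hne : (suppL m n ℓ q ∩ interior (cellUL ℓ (RS ℓ))).Nonempty := by
    cases ℓ with
    | zero => exact hK
    | succ ℓ => exact hK.2
  exact hne.ne_empty hD.1

lemma mem_active_zero_iff (hRΩ : cellUL 0 (RS 0) ⊆ Ω) {q : ℤ × ℤ} :
    q ∈ active m n Ω RS 0 ↔ (suppL m n 0 q ∩ interior Ω).Nonempty := by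
  refine ⟨fun hq => hq.elim (fun hK => hK.mono ?_) fun hD => hD.2, fun hq => ?_⟩
  · exact inter_subset_inter_right _ (interior_mono hRΩ)
  · by_cases hK : (suppL m n 0 q ∩ interior (cellUL 0 (RS 0))).Nonempty
    exacts [Or.inl hK, Or.inr ⟨not_nonempty_iff_eq_empty.mp hK, hq⟩]

lemma mem_active_succ_iff {ℓ : ℕ} (hmono : cellUL ℓ (RS ℓ) ⊆ cellUL (ℓ + 1) (RS (ℓ + 1)))
    (hRΩ : cellUL (ℓ + 1) (RS (ℓ + 1)) ⊆ Ω) {q : ℤ × ℤ} :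
    q ∈ active m n Ω RS (ℓ + 1) ↔ suppL m n (ℓ + 1) q ∩ interior (cellUL ℓ (RS ℓ)) = ∅ ∧
      (suppL m n (ℓ + 1) q ∩ interior Ω).Nonempty := by
  refine ⟨fun hq => hq.elim (fun hK => ⟨hK.1, hK.2.mono ?_⟩) fun hD => ⟨?_, hD.2⟩, fun hq => ?_⟩
  · exact inter_subset_inter_right _ (interior_mono hRΩ)
  · exact subset_empty_iff.mp (hD.1 ▸ inter_subset_inter_right _ (interior_mono hmono))
  · by_cases hK : (suppL m n (ℓ + 1) q ∩ interior (cellUL (ℓ + 1) (RS (ℓ + 1)))).Nonempty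
    exacts [Or.inl ⟨hq.1, hK⟩, Or.inr ⟨not_nonempty_iff_eq_empty.mp hK, hq.2⟩]

lemma active_succ_eq_empty {ℓ : ℕ} (hmono : cellUL ℓ (RS ℓ) ⊆ cellUL (ℓ + 1) (RS (ℓ + 1)))
    (hRΩ : cellUL (ℓ + 1) (RS (ℓ + 1)) ⊆ Ω) (htop : cellUL ℓ (RS ℓ) = Ω) :
    active m n Ω RS (ℓ + 1) = ∅ :=
  eq_empty_of_forall_notMem fun q hq => by
    obtain ⟨h₁, h₂⟩ := (mem_active_succ_iff hmono hRΩ).mp hq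
    exact h₂.ne_empty (htop ▸ h₁)

lemma weight_nonneg : ∀ ℓ q, 0 ≤ weight m n Ω RS ℓ q
  | 0, _ => zero_le_one
  | ℓ + 1, _ => finsum_mem_induction (0 ≤ ·) le_rfl (fun _ _ => add_nonneg)
      fun q _ => mul_nonneg (weight_nonneg ℓ q) (twoScaleCoeff_nonneg m n q _)

lemma weight_succ_pos (hΩ : Bornology.IsBounded Ω) {ℓ : ℕ} {p r : ℤ × ℤ}
    (hp : p ∈ refined m n Ω RS ℓ) (hr : r ∈ children m n p) (hw : 0 < weight m n Ω RS ℓ p) :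
    0 < weight m n Ω RS (ℓ + 1) r := by
  simp only [weight]
  rw [finsum_mem_eq_finite_toFinset_sum _ (finite_refined hΩ ℓ)]
  exact Finset.sum_pos' (fun q _ => mul_nonneg (weight_nonneg ℓ q) (twoScaleCoeff_nonneg m n q r))
    ⟨p, (finite_refined hΩ ℓ).mem_toFinset.mpr hp, mul_pos hw (twoScaleCoeff_pos hr)⟩

lemma weight_pos (hΩ : Bornology.IsBounded Ω) {N : ℕ}
    (hparent : ∀ ℓ r, ℓ + 1 < N → r ∈ active m n Ω RS (ℓ + 1) →
      ∃ q ∈ refined m n Ω RS ℓ, r ∈ children m n q) :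
    ∀ ℓ < N, ∀ q ∈ active m n Ω RS ℓ, 0 < weight m n Ω RS ℓ q
  | 0, _, _, _ => zero_lt_one
  | ℓ + 1, hℓ, r, hr => by
    obtain ⟨q, hq, hrq⟩ := hparent ℓ r hℓ hr
    exact weight_succ_pos hΩ hq hrq (weight_pos hΩ hparent ℓ (by omega) q (Or.inr hq))

lemma finsum_active_zero (hm : m ≠ 0) (hn : n ≠ 0) (hΩ : Bornology.IsBounded Ω)
    (hΩcl : Ω ⊆ closure (interior Ω)) (hRΩ : cellUL 0 (RS 0) ⊆ Ω) {z : ℝ × ℝ} (hz : z ∈ Ω) :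
    ∑ᶠ q ∈ active m n Ω RS 0, weight m n Ω RS 0 q * Bs m n 0 q z = 1 := by
  simp only [weight, one_mul]
  rw [finsum_mem_eq_finite_toFinset_sum _ (finite_active hΩ 0), ← finsum_Bs_eq_one hm hn 0 z,
    finsum_eq_sum_of_support_subset_of_finite _ (fun q hq => ?_) (finite_active hΩ 0)]
  exact (mem_active_zero_iff hRΩ).mpr (suppL_inter_interior_nonempty hm hn hΩcl hz hq)

lemma finsum_refined_eq_finsum_active_succ (hm : m ≠ 0) (hn : n ≠ 0)
    (hΩ : Bornology.IsBounded Ω) (hΩcl : Ω ⊆ closure (interior Ω)) {L : ℕ}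
    (hmono : cellUL L (RS L) ⊆ cellUL (L + 1) (RS (L + 1)))
    (hRΩ : cellUL (L + 1) (RS (L + 1)) ⊆ Ω) {z : ℝ × ℝ} (hz : z ∈ Ω) :
    ∑ᶠ q ∈ refined m n Ω RS L, weight m n Ω RS L q * Bs m n L q z =
      ∑ᶠ r ∈ active m n Ω RS (L + 1), weight m n Ω RS (L + 1) r * Bs m n (L + 1) r z := by
  simp only [weight, finsum_mem_eq_finite_toFinset_sum _ (finite_refined hΩ L),
    finsum_mem_eq_finite_toFinset_sum _ (finite_active hΩ (L + 1))]
  refine sum_mul_eq_sum_of_refine (fun q _ => Bs_two_scale m n L q z)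
    (fun q _ r hr => twoScaleCoeff_eq_zero hr) fun q hq r hr hB => ?_
  rw [Set.Finite.mem_toFinset] at hq ⊢
  refine (mem_active_succ_iff hmono hRΩ).mpr ⟨subset_empty_iff.mp ?_,
    suppL_inter_interior_nonempty hm hn hΩcl hz hB⟩
  exact hq.1 ▸ inter_subset_inter_left _ (suppL_succ_subset_of_mem_children hr)

lemma sum_finsum_Kset_add_finsum_active (hm : m ≠ 0) (hn : n ≠ 0)
    (hΩ : Bornology.IsBounded Ω) (hΩcl : Ω ⊆ closure (interior Ω))
    (hmono : ∀ ℓ, cellUL ℓ (RS ℓ) ⊆ cellUL (ℓ + 1) (RS (ℓ + 1)))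
    (hRΩ : ∀ ℓ, cellUL ℓ (RS ℓ) ⊆ Ω) {z : ℝ × ℝ} (hz : z ∈ Ω) (L : ℕ) :
    ∑ ℓ ∈ range L, ∑ᶠ q ∈ Kset m n RS ℓ, weight m n Ω RS ℓ q * Bs m n ℓ q z +
      ∑ᶠ q ∈ active m n Ω RS L, weight m n Ω RS L q * Bs m n L q z = 1 := by
  induction L with
  | zero => simpa using finsum_active_zero hm hn hΩ hΩcl (hRΩ 0) hz
  | succ L ih =>
    rw [Finset.sum_range_succ, add_assoc, ← finsum_refined_eq_finsum_active_succ hm hn hΩ hΩcl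
      (hmono L) (hRΩ (L + 1)) hz, ← finsum_mem_union (disjoint_Kset_refined L) (finite_Kset L)
      (finite_refined hΩ L)]
    exact ih

end HierarchicalBSpline

open HierarchicalBSpline

theorem stmt19_general (m n N : ℕ) (hm : 1 ≤ m) (hn : 1 ≤ n) (hN : 1 ≤ N)
    (S : ℕ → Finset (ℤ × ℤ))
    (hempty : ∀ ℓ, N ≤ ℓ → S ℓ = ∅)
    (hnest : ∀ ℓ, cellUL (ℓ + 1) (S (ℓ + 1)) ⊆ cellUL ℓ (S ℓ))
    (RS : ℕ → Finset (ℤ × ℤ))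
    (hRS : ∀ ℓ (p : ℤ × ℤ), p ∈ RS ℓ ↔ (cellL ℓ p ⊆ cellUL 0 (S 0) ∧
      interior (cellL ℓ p) ∩ cellUL (ℓ + 1) (S (ℓ + 1)) = ∅))
    (htilde : ∀ ℓ, 1 ≤ ℓ → ℓ < N → ∃ T : Finset (ℤ × ℤ),
      cellUL (ℓ - 1) T = cellUL ℓ (S ℓ) ∧ Atilde m n T)
    (hbdry : frontier (cellUL 0 (S 0)) ∩ frontier (cellUL 1 (S 1)) = ∅) :
    ∃ w : ℕ × (ℤ × ℤ) → ℝ,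
      (∀ x ∈ IndH m n N RS, 0 < w x) ∧
      ∀ z ∈ cellUL 0 (S 0), ∑ᶠ x ∈ IndH m n N RS, w x * Bs m n x.1 x.2 z = 1    := by
  obtain ⟨L, rfl⟩ : ∃ L, N = L + 1 := ⟨N - 1, by omega⟩
  have hR : IsRemainder S RS := hRS
  have hΩ := (isCompact_cellUL 0 (S 0)).isBounded
  have hmono := hR.cellUL_mono hnest
  have hparent : ∀ ℓ r, ℓ + 1 < L + 1 → r ∈ active m n (cellUL 0 (S 0)) RS (ℓ + 1) →
      ∃ q ∈ refined m n (cellUL 0 (S 0)) RS ℓ, r ∈ children m n q := by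
    intro ℓ r hℓ hr
    obtain ⟨T, hT, hAt⟩ := htilde (ℓ + 1) (by omega) hℓ
    obtain ⟨h₁, h₂⟩ := (mem_active_succ_iff (hmono ℓ) (hR.cellUL_subset _)).mp hr
    obtain ⟨q, hrq, hq⟩ := hR.exists_parent hnest hbdry hT hAt h₁ h₂
    exact ⟨q, hq, hrq⟩
  refine ⟨fun x => weight m n (cellUL 0 (S 0)) RS x.1 x.2,
    fun x hx => weight_pos hΩ hparent x.1 hx.1 x.2 (Or.inl hx.2), fun z hz => ?_⟩
  have h := sum_finsum_Kset_add_finsum_active (m := m) (n := n) (by omega) (by omega) hΩ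
    (cellUL_subset_closure_interior 0 (S 0)) hmono hR.cellUL_subset hz (L + 1)
  rw [active_succ_eq_empty (hmono L) (hR.cellUL_subset _) (hR.cellUL_eq (hempty _ le_rfl)),
    finsum_mem_empty, add_zero] at h
  rwa [IndH, finsum_mem_setOf_fst_lt finite_Kset
    (fun x => weight m n (cellUL 0 (S 0)) RS x.1 x.2 * Bs m n x.1 x.2 z)]

/-- Weighted partition of unity for hierarchical B-splines: if `Ω⁰ ∈ A²_{m−1,n−1}`
w.r.t. `G⁰`, `Ωℓ ∈ Ã²_{m,n}` w.r.t. `G^{ℓ−1}` for `ℓ = 1,…,N−1`, and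
`∂Ω⁰ ∩ ∂Ω¹ = ∅`, then there are strictly positive weights making the selected
hierarchical B-splines sum to one on `Ω⁰`. -/
theorem stmt19 (m n N : ℕ) (hm : 1 ≤ m) (hn : 1 ≤ n) (hN : 1 ≤ N)
    (S : ℕ → Finset (ℤ × ℤ))
    (hempty : ∀ ℓ, N ≤ ℓ → S ℓ = ∅)
    (hnest : ∀ ℓ, cellUL (ℓ + 1) (S (ℓ + 1)) ⊆ cellUL ℓ (S ℓ))
    (RS : ℕ → Finset (ℤ × ℤ))
    (hRS : ∀ ℓ (p : ℤ × ℤ), p ∈ RS ℓ ↔ (cellL ℓ p ⊆ cellUL 0 (S 0) ∧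
      interior (cellL ℓ p) ∩ cellUL (ℓ + 1) (S (ℓ + 1)) = ∅))
    (hΩ0 : A2 (m - 1) (n - 1) (S 0))
    (htilde : ∀ ℓ, 1 ≤ ℓ → ℓ < N → ∃ T : Finset (ℤ × ℤ),
      cellUL (ℓ - 1) T = cellUL ℓ (S ℓ) ∧ Atilde m n T)
    (hbdry : frontier (cellUL 0 (S 0)) ∩ frontier (cellUL 1 (S 1)) = ∅) :
    ∃ w : ℕ × (ℤ × ℤ) → ℝ,
      (∀ x ∈ IndH m n N RS, 0 < w x) ∧
      ∀ z ∈ cellUL 0 (S 0), ∑ᶠ x ∈ IndH m n N RS, w x * Bs m n x.1 x.2 z = 1 :=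
  stmt19_general m n N hm hn hN S hempty hnest RS hRS htilde hbdry
end
end
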